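/- arXiv:2604.24438 — 10 statements merged into one kernel-verified Lean document; each statement's English description precedes it below -/
import Mathlib

section
/- Let A, B, C, D > 0 be real numbers and let s₁, s₂ ∈ (0,2) and s₃ ∈ (2,∞) be real. Then the set of positive real numbers t satisfying 2·A·t = B·s₁·t^(s₁−1) + C·s₂·t^(s₂−1) + D·s₃·t^(s₃−1) (i.e., the set of positive critical points of f(t) := A·t² − B·t^(s₁) − C·t^(s₂) − D·t^(s₃)) has at most two elements. -/
/-!
Dividing the critical point equation by `t` and substituting `t = exp x` turns it into
`g x = 2A` with `g x = B s₁ e^{(s₁-2)x} + C s₂ e^{(s₂-2)x} + D s₃ e^{(s₃-2)x}`. Every coefficient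
is positive and every exponent is nonzero, so `g` is strictly convex on `ℝ`, and a strictly convex
function of one variable attains each value at most twice: of three points `x < y < z` on a level
set, `y` would lie strictly below the level.
-/

open Set Real

theorem Set.encard_le_two_of_forall_lt_not_lt {α : Type*} [LinearOrder α] {S : Set α}
    (h : ∀ x ∈ S, ∀ y ∈ S, ∀ z ∈ S, x < y → ¬y < z) : S.encard ≤ 2 := by
  by_contra! hS
  obtain ⟨t, htS, ht⟩ := exists_subset_encard_eq (Order.add_one_le_of_lt hS)
  have hfin : t.Finite := finite_of_encard_eq_coe ht
  have hcard : hfin.toFinset.card = 3 := by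
    exact_mod_cast hfin.encard_eq_coe_toFinset_card.symm.trans ht
  set e := hfin.toFinset.orderEmbOfFin hcard
  have he : ∀ i, e i ∈ S := fun i => htS (hfin.mem_toFinset.1 (Finset.orderEmbOfFin_mem _ _ i))
  exact h _ (he 0) _ (he 1) _ (he 2) (e.strictMono (by decide)) (e.strictMono (by decide))

theorem StrictConvexOn.encard_setOf_eq_le_two {𝕜 β : Type*} [Field 𝕜] [LinearOrder 𝕜]
    [IsStrictOrderedRing 𝕜] [AddCommMonoid β] [LinearOrder β] [IsOrderedAddMonoid β]
    [Module 𝕜 β] [PosSMulStrictMono 𝕜 β] {s : Set 𝕜} {f : 𝕜 → β} (hf : StrictConvexOn 𝕜 s f)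
    (c : β) :
    {x ∈ s | f x = c}.encard ≤ 2 := by
  refine encard_le_two_of_forall_lt_not_lt fun x hx y hy z hz hxy hyz => ?_
  have hmid : y ∈ openSegment 𝕜 x z := by
    rw [openSegment_eq_Ioo (hxy.trans hyz)]
    exact ⟨hxy, hyz⟩
  have := hf.lt_on_openSegment hx.1 hz.1 (hxy.trans hyz).ne hmid
  rw [hx.2, hy.2, hz.2, max_self] at this
  exact lt_irrefl c this

theorem strictConvexOn_const_mul_exp_mul {c a : ℝ} (hc : 0 < c) (ha : a ≠ 0) :
    StrictConvexOn ℝ univ fun x => c * exp (a * x) := by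
  refine ⟨convex_univ, fun x _ y _ hxy p q hp hq hpq => ?_⟩
  have hexp := strictConvexOn_exp.2 (mem_univ (a * x)) (mem_univ (a * y))
    (mul_right_injective₀ ha |>.ne hxy) hp hq hpq
  simp only [smul_eq_mul] at hexp ⊢
  calc c * exp (a * (p * x + q * y)) = c * exp (p * (a * x) + q * (a * y)) := by ring_nf
    _ < c * (p * exp (a * x) + q * exp (a * y)) := mul_lt_mul_of_pos_left hexp hc
    _ = p * (c * exp (a * x)) + q * (c * exp (a * y)) := by ring

theorem rpow_sub_one_eq_exp_mul_log_mul {t : ℝ} (ht : 0 < t) (s : ℝ) :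
    t ^ (s - 1) = exp ((s - 2) * log t) * t := by
  rw [mul_comm (s - 2), ← rpow_def_of_pos ht, ← rpow_add_one ht.ne']
  ring_nf

theorem at_most_two_positive_critical_points_general
    (A B C D s₁ s₂ s₃ : ℝ) (hB : 0 < B) (hC : 0 < C) (hD : 0 < D)
    (hs₁ : s₁ ∈ Set.Ioo (0 : ℝ) 2) (hs₂ : s₂ ∈ Set.Ioo (0 : ℝ) 2) (hs₃ : 2 < s₃) :
    {t : ℝ | 0 < t ∧
      2 * A * t = B * s₁ * t ^ (s₁ - 1) + C * s₂ * t ^ (s₂ - 1) + D * s₃ * t ^ (s₃ - 1)}.encard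
      ≤ 2 := by
  set g : ℝ → ℝ := fun x => B * s₁ * exp ((s₁ - 2) * x) + C * s₂ * exp ((s₂ - 2) * x) +
    D * s₃ * exp ((s₃ - 2) * x)
  have hg : StrictConvexOn ℝ univ g :=
    ((strictConvexOn_const_mul_exp_mul (mul_pos hB hs₁.1) (sub_ne_zero.2 hs₁.2.ne)).add
      (strictConvexOn_const_mul_exp_mul (mul_pos hC hs₂.1) (sub_ne_zero.2 hs₂.2.ne))).add
      (strictConvexOn_const_mul_exp_mul (mul_pos hD (two_pos.trans hs₃)) (sub_ne_zero.2 hs₃.ne'))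
  have hsub : {t : ℝ | 0 < t ∧ 2 * A * t = B * s₁ * t ^ (s₁ - 1) + C * s₂ * t ^ (s₂ - 1) +
      D * s₃ * t ^ (s₃ - 1)} ⊆ exp '' {x ∈ univ | g x = 2 * A} := by
    rintro t ⟨ht, heq⟩
    refine ⟨log t, ⟨mem_univ _, mul_right_cancel₀ ht.ne' ?_⟩, exp_log ht⟩
    simp only [rpow_sub_one_eq_exp_mul_log_mul ht] at heq
    linear_combination -heq
  calc _ ≤ _ := encard_le_encard hsub
    _ ≤ _ := encard_image_le _ _
    _ ≤ 2 := hg.encard_setOf_eq_le_two _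

/-- The set of positive critical points of `f(t) = A t^2 - B t^{s₁} - C t^{s₂} - D t^{s₃}`,
i.e. positive roots of `2At = B s₁ t^{s₁-1} + C s₂ t^{s₂-1} + D s₃ t^{s₃-1}`, has at most
two elements. -/
theorem at_most_two_positive_critical_points
    (A B C D s₁ s₂ s₃ : ℝ) (hA : 0 < A) (hB : 0 < B) (hC : 0 < C) (hD : 0 < D)
    (hs₁ : s₁ ∈ Set.Ioo (0 : ℝ) 2) (hs₂ : s₂ ∈ Set.Ioo (0 : ℝ) 2) (hs₃ : 2 < s₃) :
    {t : ℝ | 0 < t ∧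
      2 * A * t = B * s₁ * t ^ (s₁ - 1) + C * s₂ * t ^ (s₂ - 1) + D * s₃ * t ^ (s₃ - 1)}.encard
      ≤ 2 :=
  at_most_two_positive_critical_points_general A B C D s₁ s₂ s₃ hB hC hD hs₁ hs₂ hs₃
end

section
/- Let A, B, C, D > 0 be real numbers, s₁, s₂ ∈ (0,2) and s₃ ∈ (2,∞). Suppose 2A = B·s₁ + C·s₂ + D·s₃ (i.e., f′(1) = 0 for f(t) := A·t² − B·t^(s₁) − C·t^(s₂) − D·t^(s₃)) and A − B − C − D > 0 (i.e., f(1) > 0). Then for every t > 0, A·t² − B·t^(s₁) − C·t^(s₂) − D·t^(s₃) ≤ A − B − C − D; that is, f attains its maximum over (0,∞) at t = 1. -/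
private lemma convex_g (u : ℝ) (hu : 0 < u) :
    ConvexOn ℝ Set.univ (fun s : ℝ => u ^ s - 1 - s * (u - 1)) := by
  have hexp : ConvexOn ℝ Set.univ (fun s : ℝ => u ^ s) := by
    have heq : (fun s : ℝ => u ^ s) = fun s : ℝ => Real.exp (Real.log u * s) := by
      funext s
      rw [Real.rpow_def_of_pos hu]
    rw [heq]
    refine ⟨convex_univ, fun x _ y _ p q hp hq hpq => ?_⟩
    have h := convexOn_exp.2 (Set.mem_univ (Real.log u * x)) (Set.mem_univ (Real.log u * y)) hp hq hpq
    simp only [smul_eq_mul] at h ⊢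
    have harg : Real.log u * (p * x + q * y) = p * (Real.log u * x) + q * (Real.log u * y) := by
      ring
    rw [harg]
    exact h
  have haff : ConvexOn ℝ Set.univ (fun s : ℝ => -1 - s * (u - 1)) := by
    refine ⟨convex_univ, fun x _ y _ p q hp hq hpq => ?_⟩
    simp only [smul_eq_mul]
    apply le_of_eq
    linear_combination hpq
  have h := hexp.add haff
  rw [show (fun s : ℝ => u ^ s - 1 - s * (u - 1)) = (fun s : ℝ => u ^ s) + (fun s : ℝ => -1 - s * (u - 1)) from ?_]
  · exact h
  funext s
  simp only [Pi.add_apply]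
  ring

/-- If `f(t) = A t^2 - B t^{s₁} - C t^{s₂} - D t^{s₃}` with `A,B,C,D > 0`,
`s₁, s₂ ∈ (0,2)`, `s₃ > 2`, satisfies `f'(1) = 0` (i.e. `2A = B s₁ + C s₂ + D s₃`)
and `f(1) > 0`, then `f` attains its maximum over `(0,∞)` at `t = 1`. -/
theorem max_at_one_of_crit_and_pos
    (A B C D s₁ s₂ s₃ : ℝ) (hA : 0 < A) (hB : 0 < B) (hC : 0 < C) (hD : 0 < D)
    (hs₁ : s₁ ∈ Set.Ioo (0 : ℝ) 2) (hs₂ : s₂ ∈ Set.Ioo (0 : ℝ) 2) (hs₃ : 2 < s₃)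
    (hcrit : 2 * A = B * s₁ + C * s₂ + D * s₃)
    (hpos : 0 < A - B - C - D) :
    ∀ t : ℝ, 0 < t →
      A * t ^ 2 - B * t ^ s₁ - C * t ^ s₂ - D * t ^ s₃ ≤ A - B - C - D := by
  intro t ht
  obtain ⟨hs₁0, hs₁2⟩ := hs₁
  obtain ⟨hs₂0, hs₂2⟩ := hs₂
  set u : ℝ := t ^ (2:ℝ) with hu_def
  have hu : 0 < u := Real.rpow_pos_of_pos ht 2
  set g : ℝ → ℝ := fun s => u ^ s - 1 - s * (u - 1) with hg_def
  have hconv := convex_g u hu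
  have hg0 : g 0 = 0 := by simp [hg_def]
  have hg1 : g 1 = 0 := by simp [hg_def, Real.rpow_one]
  have hpow : ∀ s : ℝ, t ^ s = u ^ (s / 2) := by
    intro s
    rw [hu_def, ← Real.rpow_mul ht.le]
    congr 1
    ring
  have ht2 : t ^ (2:ℕ) = u := by
    rw [hu_def, show ((2:ℝ)) = ((2:ℕ):ℝ) by norm_num, Real.rpow_natCast]
  set a := s₁ / 2 with ha_def
  set b := s₂ / 2 with hb_def
  set c := s₃ / 2 with hc_def
  have ha1 : a - 1 < 0 := by rw [ha_def]; linarith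
  have hb1 : b - 1 < 0 := by rw [hb_def]; linarith
  have hc1 : (0:ℝ) < c - 1 := by rw [hc_def]; linarith
  have ha0 : 0 < a := by rw [ha_def]; linarith
  have hb0 : 0 < b := by rw [hb_def]; linarith
  set S : ℝ := (g c - g 1) / (c - 1) with hS_def
  have slope_nonneg : 0 ≤ S := by
    have h0 := hconv.secant_mono (Set.mem_univ (1:ℝ)) (Set.mem_univ (0:ℝ))
      (Set.mem_univ c) (by norm_num) (by intro h; rw [h] at hc1; linarith) (by linarith)
    have hz : (g 0 - g 1) / ((0:ℝ) - 1) = 0 := by rw [hg0, hg1]; norm_num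
    rw [hS_def]
    calc (0:ℝ) = (g 0 - g 1) / ((0:ℝ) - 1) := hz.symm
      _ ≤ (g c - g 1) / (c - 1) := h0
  have slope_a : (g a - g 1) / (a - 1) ≤ S :=
    hconv.secant_mono (Set.mem_univ (1:ℝ)) (Set.mem_univ a) (Set.mem_univ c)
      (by intro h; rw [h] at ha1; linarith) (by intro h; rw [h] at hc1; linarith) (by linarith)
  have slope_b : (g b - g 1) / (b - 1) ≤ S :=
    hconv.secant_mono (Set.mem_univ (1:ℝ)) (Set.mem_univ b) (Set.mem_univ c)
      (by intro h; rw [h] at hb1; linarith) (by intro h; rw [h] at hc1; linarith) (by linarith)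
  have key_a : B * ((a - 1) * S) ≤ B * g a := by
    have h1 := mul_le_mul_of_nonpos_left slope_a (le_of_lt ha1)
    have h2 : (a - 1) * ((g a - g 1) / (a - 1)) = g a := by
      rw [hg1, sub_zero, mul_comm, div_mul_cancel₀ _ (show a - 1 ≠ 0 by linarith)]
    rw [h2] at h1
    exact mul_le_mul_of_nonneg_left h1 hB.le
  have key_b : C * ((b - 1) * S) ≤ C * g b := by
    have h1 := mul_le_mul_of_nonpos_left slope_b (le_of_lt hb1)
    have h2 : (b - 1) * ((g b - g 1) / (b - 1)) = g b := by
      rw [hg1, sub_zero, mul_comm, div_mul_cancel₀ _ (show b - 1 ≠ 0 by linarith)]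
    rw [h2] at h1
    exact mul_le_mul_of_nonneg_left h1 hC.le
  have key_c : D * ((c - 1) * S) = D * g c := by
    have h2 : (c - 1) * ((g c - g 1) / (c - 1)) = g c := by
      rw [hg1, sub_zero, mul_comm, div_mul_cancel₀ _ (show c - 1 ≠ 0 by linarith)]
    rw [hS_def, h2]
  have hcoef : 0 < B * (a - 1) + C * (b - 1) + D * (c - 1) := by
    have heq : B * (a - 1) + C * (b - 1) + D * (c - 1) = A - B - C - D := by
      rw [ha_def, hb_def, hc_def]; linarith
    linarith
  have hprod : 0 ≤ (B * (a - 1) + C * (b - 1) + D * (c - 1)) * S :=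
    mul_nonneg hcoef.le slope_nonneg
  have hring : B * ((a - 1) * S) + C * ((b - 1) * S) + D * ((c - 1) * S)
      = (B * (a - 1) + C * (b - 1) + D * (c - 1)) * S := by ring
  have sum_nonneg : 0 ≤ B * g a + C * g b + D * g c := by linarith
  have expand : B * g a + C * g b + D * g c
      = (A - B - C - D) - (A * u - B * u ^ a - C * u ^ b - D * u ^ c) := by
    simp only [hg_def]
    have hA' : A = B * a + C * b + D * c := by
      rw [ha_def, hb_def, hc_def]; linarith
    rw [hA']; ring
  rw [expand] at sum_nonneg
  calc A * t ^ 2 - B * t ^ s₁ - C * t ^ s₂ - D * t ^ s₃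
      = A * u - B * u ^ a - C * u ^ b - D * u ^ c := by
        rw [hpow s₁, hpow s₂, hpow s₃, ht2, ha_def, hb_def, hc_def]
    _ ≤ A - B - C - D := by linarith
end

section
/- Let B, C, D > 0 and let s₁, s₂, s₃ be real numbers with 0 < s₂ ≤ s₁ < 2 < s₃. Define h : (0,∞) → ℝ by h(t) := −B·s₁·(s₁−2) − C·s₂·(s₂−2)·t^(s₂−s₁) − D·s₃·(s₃−2)·t^(s₃−s₁). Then h is strictly decreasing on (0,∞) and there is exactly one t > 0 with h(t) = 0. -/
/-!
Write `h t = A - c t^p - d t^q` with `A, d > 0 ≥ c`, `p = s₂ - s₁ ≤ 0` and `q = s₃ - s₁ > 0`.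
Then `-c t^p` is antitone and `-d t^q` strictly antitone, so `h` is strictly decreasing.
As `t → 0⁺` we have `h t ≥ A - d t^q → A > 0`, while for `t ≥ 1` we have `h t ≤ A - c - d t^q → -∞`;
the intermediate value theorem gives a root, and strict monotonicity makes it unique.
-/

open Real Set Filter Topology

theorem IsPreconnected.existsUnique_eq_zero_of_strictAntiOn {f : ℝ → ℝ} {S : Set ℝ}
    (hS : IsPreconnected S) (hf : ContinuousOn f S) (hanti : StrictAntiOn f S) {a b : ℝ}
    (ha : a ∈ S) (hb : b ∈ S) (hfa : 0 ≤ f a) (hfb : f b ≤ 0) :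
    ∃! t, t ∈ S ∧ f t = 0 := by
  obtain ⟨t, htS, hft⟩ := hS.intermediate_value hb ha hf ⟨hfb, hfa⟩
  exact ⟨t, ⟨htS, hft⟩, fun u ⟨huS, hfu⟩ => hanti.injOn huS htS (hfu.trans hft.symm)⟩

section RpowCombination

variable {A c d p q : ℝ}

theorem strictAntiOn_sub_mul_rpow_sub_mul_rpow (hc : c ≤ 0) (hp : p ≤ 0) (hd : 0 < d)
    (hq : 0 < q) : StrictAntiOn (fun t : ℝ => A - c * t ^ p - d * t ^ q) (Ioi 0) := by
  intro x (hx : 0 < x) y _ hxy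
  have hp_term : c * x ^ p ≤ c * y ^ p :=
    mul_le_mul_of_nonpos_left (rpow_le_rpow_of_nonpos hx hxy.le hp) hc
  have hq_term : d * x ^ q < d * y ^ q := mul_lt_mul_of_pos_left (rpow_lt_rpow hx.le hxy hq) hd
  dsimp only
  linarith

theorem continuousOn_sub_mul_rpow_sub_mul_rpow :
    ContinuousOn (fun t : ℝ => A - c * t ^ p - d * t ^ q) (Ioi 0) := by
  have hrpow (r : ℝ) : ContinuousOn (fun t : ℝ => t ^ r) (Ioi 0) :=
    continuousOn_id.rpow_const fun t (ht : 0 < t) => Or.inl ht.ne'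
  exact (continuousOn_const.sub (continuousOn_const.mul (hrpow p))).sub
    (continuousOn_const.mul (hrpow q))

theorem exists_pos_sub_mul_rpow_sub_mul_rpow_pos (hA : 0 < A) (hc : c ≤ 0) (hq : 0 < q) :
    ∃ t > 0, 0 < A - c * t ^ p - d * t ^ q := by
  have hsmall : Tendsto (fun t : ℝ => d * t ^ q) (𝓝[>] 0) (𝓝 0) := by
    have h := ((continuous_rpow_const hq.le).tendsto 0).const_mul d
    rw [zero_rpow hq.ne', mul_zero] at h
    exact h.mono_left nhdsWithin_le_nhds
  obtain ⟨t, hdt, ht : 0 < t⟩ :=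
    ((hsmall.eventually (gt_mem_nhds hA)).and self_mem_nhdsWithin).exists
  have : c * t ^ p ≤ 0 := mul_nonpos_of_nonpos_of_nonneg hc (rpow_nonneg ht.le p)
  exact ⟨t, ht, by linarith⟩

theorem exists_pos_sub_mul_rpow_sub_mul_rpow_neg (hc : c ≤ 0) (hp : p ≤ 0) (hd : 0 < d)
    (hq : 0 < q) : ∃ t > 0, A - c * t ^ p - d * t ^ q < 0 := by
  have hlarge : Tendsto (fun t : ℝ => d * t ^ q) atTop atTop :=
    (tendsto_rpow_atTop hq).const_mul_atTop hd
  obtain ⟨t, ht, hdt⟩ := ((eventually_ge_atTop 1).and (hlarge.eventually_gt_atTop (A - c))).exists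
  have : c ≤ c * t ^ p := le_mul_of_le_one_right hc (rpow_le_one_of_one_le_of_nonpos ht hp)
  exact ⟨t, by linarith, by linarith⟩

end RpowCombination

/-- Let `B, C, D > 0` and `0 < s₂ ≤ s₁ < 2 < s₃`. The function
`h(t) = -B s₁ (s₁-2) - C s₂ (s₂-2) t^(s₂-s₁) - D s₃ (s₃-2) t^(s₃-s₁)` is strictly
decreasing on `(0,∞)` and has exactly one positive root. -/
theorem strictAntiOn_and_unique_root
    (B C D s₁ s₂ s₃ : ℝ) (hB : 0 < B) (hC : 0 < C) (hD : 0 < D)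
    (hs₂ : 0 < s₂) (hs₂₁ : s₂ ≤ s₁) (hs₁ : s₁ < 2) (hs₃ : 2 < s₃) :
    StrictAntiOn
      (fun t : ℝ =>
        -(B * s₁ * (s₁ - 2)) - C * s₂ * (s₂ - 2) * t ^ (s₂ - s₁)
          - D * s₃ * (s₃ - 2) * t ^ (s₃ - s₁)) (Set.Ioi 0) ∧
    ∃! t : ℝ, 0 < t ∧
      -(B * s₁ * (s₁ - 2)) - C * s₂ * (s₂ - 2) * t ^ (s₂ - s₁)
        - D * s₃ * (s₃ - 2) * t ^ (s₃ - s₁) = 0 := by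
  have hA : 0 < -(B * s₁ * (s₁ - 2)) := by
    nlinarith [mul_pos (mul_pos hB (hs₂.trans_le hs₂₁)) (sub_pos.2 hs₁)]
  have hc : C * s₂ * (s₂ - 2) ≤ 0 := by
    nlinarith [mul_pos (mul_pos hC hs₂) (sub_pos.2 (hs₂₁.trans_lt hs₁))]
  have hd : 0 < D * s₃ * (s₃ - 2) := by
    nlinarith [mul_pos (mul_pos hD (two_pos.trans hs₃)) (sub_pos.2 hs₃)]
  have hp : s₂ - s₁ ≤ 0 := by linarith
  have hq : 0 < s₃ - s₁ := by linarith
  have hanti := strictAntiOn_sub_mul_rpow_sub_mul_rpow (A := -(B * s₁ * (s₁ - 2))) hc hp hd hq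
  obtain ⟨a, ha, hfa⟩ := exists_pos_sub_mul_rpow_sub_mul_rpow_pos (p := s₂ - s₁)
    (d := D * s₃ * (s₃ - 2)) hA hc hq
  obtain ⟨b, hb, hfb⟩ := exists_pos_sub_mul_rpow_sub_mul_rpow_neg
    (A := -(B * s₁ * (s₁ - 2))) hc hp hd hq
  exact ⟨hanti, isPreconnected_Ioi.existsUnique_eq_zero_of_strictAntiOn
    continuousOn_sub_mul_rpow_sub_mul_rpow hanti ha hb hfa.le hfb.le⟩
end

section
/- Let α, β > 1 be real numbers with α + β > 3, and let 0 < L₁ ≤ L₂ < ∞. Then there exist constants A₁ > 0 and A₂ > 0 such that for all t₁, t₂ ∈ [L₁, L₂] and all s ≥ 0: (t₁+s)^α·(t₂+s)^β − t₁^α·t₂^β − s^(α+β) − α·t₁^(α−1)·t₂^β·s − β·t₂^(β−1)·t₁^α·s ≥ A₁·s^(α+β−1) − A₂·s². -/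
lemma tangent_rpow {p x y : ℝ} (hp : 1 ≤ p) (hx : 0 < x) (hy : 0 ≤ y) :
    x ^ p + p * x ^ (p - 1) * y ≤ (x + y) ^ p := by
  have h0 : x + y = x * (1 + y / x) := by field_simp
  have h1 : (x + y) ^ p = x ^ p * (1 + y / x) ^ p := by
    rw [h0, Real.mul_rpow hx.le (by positivity)]
  have hbern : 1 + p * (y / x) ≤ (1 + y / x) ^ p :=
    one_add_mul_self_le_rpow_one_add (by nlinarith [div_nonneg hy hx.le]) hp
  have h2 : x ^ p * (1 + p * (y / x)) ≤ x ^ p * (1 + y / x) ^ p :=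
    mul_le_mul_of_nonneg_left hbern (Real.rpow_nonneg hx.le p)
  have h3 : x ^ p * (1 + p * (y / x)) = x ^ p + p * x ^ (p - 1) * y := by
    rw [Real.rpow_sub hx, Real.rpow_one]
    field_simp
  linarith [h1 ▸ h2, h3 ▸ h2]

set_option maxHeartbeats 1000000 in
/-- Interaction estimate: for `α, β > 1` with `α + β > 3` and `0 < L₁ ≤ L₂ < ∞`,
there are `A₁, A₂ > 0` such that for all `t₁, t₂ ∈ [L₁, L₂]` and `s ≥ 0`,
`(t₁+s)^α (t₂+s)^β - t₁^α t₂^β - s^(α+β) - α t₁^(α-1) t₂^β s - β t₂^(β-1) t₁^α s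
  ≥ A₁ s^(α+β-1) - A₂ s²`. -/
theorem interaction_lower_bound
    (α β L₁ L₂ : ℝ) (hα : 1 < α) (hβ : 1 < β) (hαβ : 3 < α + β)
    (hL₁ : 0 < L₁) (hL : L₁ ≤ L₂) :
    ∃ A₁ A₂ : ℝ, 0 < A₁ ∧ 0 < A₂ ∧
      ∀ t₁ t₂ s : ℝ, t₁ ∈ Set.Icc L₁ L₂ → t₂ ∈ Set.Icc L₁ L₂ → 0 ≤ s →
        (t₁ + s) ^ α * (t₂ + s) ^ β - t₁ ^ α * t₂ ^ β - s ^ (α + β)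
            - α * t₁ ^ (α - 1) * t₂ ^ β * s - β * t₂ ^ (β - 1) * t₁ ^ α * s
          ≥ A₁ * s ^ (α + β - 1) - A₂ * s ^ 2 := by
  have hL₂ : 0 < L₂ := hL₁.trans_le hL
  refine ⟨min 1 ((α + β) * L₁), L₂ ^ (α + β) + (α + β) * L₂ ^ (α + β - 1) + 2,
    lt_min one_pos (by positivity), by positivity, ?_⟩
  rintro t₁ t₂ s ⟨h1l, h1u⟩ ⟨h2l, h2u⟩ hs
  have ht₁0 : 0 < t₁ := hL₁.trans_le h1l
  have ht₂0 : 0 < t₂ := hL₁.trans_le h2l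
  rcases eq_or_lt_of_le hs with h0 | hs0
  · simp [← h0, Real.zero_rpow (show α + β ≠ 0 by positivity),
      Real.zero_rpow (show α + β - 1 ≠ 0 by intro h; linarith)]
  rcases le_or_gt s 1 with hs1 | hs1
  · -- small s : LHS ≥ -s^(α+β) ≥ A₁ s^(α+β-1) - A₂ s²
    have hA := tangent_rpow hα.le ht₁0 hs
    have hB := tangent_rpow hβ.le ht₂0 hs
    have hPQ : (t₁ ^ α + α * t₁ ^ (α - 1) * s) * (t₂ ^ β + β * t₂ ^ (β - 1) * s)
        ≤ (t₁ + s) ^ α * (t₂ + s) ^ β :=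
      mul_le_mul hA hB (by positivity) (Real.rpow_nonneg (by positivity) α)
    have hexp : (t₁ ^ α + α * t₁ ^ (α - 1) * s) * (t₂ ^ β + β * t₂ ^ (β - 1) * s)
        = t₁ ^ α * t₂ ^ β + α * t₁ ^ (α - 1) * t₂ ^ β * s + β * t₂ ^ (β - 1) * t₁ ^ α * s
          + (α * t₁ ^ (α - 1) * s) * (β * t₂ ^ (β - 1) * s) := by ring
    have hx : (0:ℝ) ≤ (α * t₁ ^ (α - 1) * s) * (β * t₂ ^ (β - 1) * s) := by positivity
    have hr2 : s ^ (2:ℝ) = s ^ 2 := by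
      rw [show (2:ℝ) = ((2:ℕ):ℝ) by norm_num, Real.rpow_natCast]
    have h2 : s ^ (α + β - 1) ≤ s ^ 2 := by
      rw [← hr2]; exact Real.rpow_le_rpow_of_exponent_ge hs0 hs1 (by linarith)
    have h3 : s ^ (α + β) ≤ s ^ 2 := by
      rw [← hr2]; exact Real.rpow_le_rpow_of_exponent_ge hs0 hs1 (by linarith)
    have h4 : min 1 ((α + β) * L₁) * s ^ (α + β - 1) ≤ s ^ (α + β - 1) := by
      have := Real.rpow_nonneg hs (α + β - 1)
      nlinarith [min_le_left 1 ((α + β) * L₁)]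
    have h5 : 2 * s ^ 2 ≤ (L₂ ^ (α + β) + (α + β) * L₂ ^ (α + β - 1) + 2) * s ^ 2 := by
      have hC : (0:ℝ) ≤ L₂ ^ (α + β) + (α + β) * L₂ ^ (α + β - 1) := by positivity
      nlinarith [sq_nonneg s]
    linarith [hPQ, hexp ▸ hPQ]
  · -- large s
    have hA := tangent_rpow hα.le hs0 ht₁0.le
    have hB := tangent_rpow hβ.le hs0 ht₂0.le
    rw [add_comm s t₁] at hA
    rw [add_comm s t₂] at hB
    have hPQ : (s ^ α + α * s ^ (α - 1) * t₁) * (s ^ β + β * s ^ (β - 1) * t₂)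
        ≤ (t₁ + s) ^ α * (t₂ + s) ^ β :=
      mul_le_mul hA hB (by positivity) (Real.rpow_nonneg (by positivity) α)
    have e1 : s ^ α * s ^ β = s ^ (α + β) := (Real.rpow_add hs0 α β).symm
    have e2 : s ^ (α - 1) * s ^ β = s ^ (α + β - 1) := by
      rw [← Real.rpow_add hs0]; congr 1; ring
    have e3 : s ^ α * s ^ (β - 1) = s ^ (α + β - 1) := by
      rw [← Real.rpow_add hs0]; congr 1; ring
    have hexp : (s ^ α + α * s ^ (α - 1) * t₁) * (s ^ β + β * s ^ (β - 1) * t₂)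
        = s ^ α * s ^ β + α * t₁ * (s ^ (α - 1) * s ^ β) + β * t₂ * (s ^ α * s ^ (β - 1))
          + (α * s ^ (α - 1) * t₁) * (β * s ^ (β - 1) * t₂) := by ring
    rw [e1, e2, e3] at hexp
    have hx : (0:ℝ) ≤ (α * s ^ (α - 1) * t₁) * (β * s ^ (β - 1) * t₂) := by positivity
    have hlow : s ^ (α + β) + α * t₁ * s ^ (α + β - 1) + β * t₂ * s ^ (α + β - 1)
        ≤ (t₁ + s) ^ α * (t₂ + s) ^ β := by linarith [hexp ▸ hPQ]
    have u1 : t₁ ^ α ≤ L₂ ^ α := Real.rpow_le_rpow ht₁0.le h1u (by linarith)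
    have u2 : t₂ ^ β ≤ L₂ ^ β := Real.rpow_le_rpow ht₂0.le h2u (by linarith)
    have u3 : t₁ ^ (α - 1) ≤ L₂ ^ (α - 1) := Real.rpow_le_rpow ht₁0.le h1u (by linarith)
    have u4 : t₂ ^ (β - 1) ≤ L₂ ^ (β - 1) := Real.rpow_le_rpow ht₂0.le h2u (by linarith)
    have m1 : t₁ ^ α * t₂ ^ β ≤ L₂ ^ (α + β) := by
      calc t₁ ^ α * t₂ ^ β ≤ L₂ ^ α * L₂ ^ β :=
            mul_le_mul u1 u2 (Real.rpow_nonneg ht₂0.le β) (Real.rpow_nonneg hL₂.le α)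
        _ = L₂ ^ (α + β) := (Real.rpow_add hL₂ α β).symm
    have m2 : t₁ ^ (α - 1) * t₂ ^ β ≤ L₂ ^ (α + β - 1) := by
      calc t₁ ^ (α - 1) * t₂ ^ β ≤ L₂ ^ (α - 1) * L₂ ^ β :=
            mul_le_mul u3 u2 (Real.rpow_nonneg ht₂0.le β) (Real.rpow_nonneg hL₂.le _)
        _ = L₂ ^ (α + β - 1) := by rw [← Real.rpow_add hL₂]; congr 1; ring
    have m3 : t₂ ^ (β - 1) * t₁ ^ α ≤ L₂ ^ (α + β - 1) := by
      calc t₂ ^ (β - 1) * t₁ ^ α ≤ L₂ ^ (β - 1) * L₂ ^ α :=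
            mul_le_mul u4 u1 (Real.rpow_nonneg ht₁0.le α) (Real.rpow_nonneg hL₂.le _)
        _ = L₂ ^ (α + β - 1) := by rw [← Real.rpow_add hL₂]; congr 1; ring
    have hss : s ≤ s ^ 2 := by
      have h := mul_le_mul_of_nonneg_left hs1.le hs
      rw [mul_one, ← sq] at h; exact h
    have h1s : (1:ℝ) ≤ s ^ 2 := by linarith
    have b1 : t₁ ^ α * t₂ ^ β ≤ L₂ ^ (α + β) * s ^ 2 := by
      have : L₂ ^ (α + β) ≤ L₂ ^ (α + β) * s ^ 2 :=
        le_mul_of_one_le_right (Real.rpow_nonneg hL₂.le _) h1s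
      linarith
    have b2 : α * t₁ ^ (α - 1) * t₂ ^ β * s ≤ α * L₂ ^ (α + β - 1) * s ^ 2 := by
      have h := mul_le_mul m2 hss hs (Real.rpow_nonneg hL₂.le _)
      have h' := mul_le_mul_of_nonneg_left h (by linarith : (0:ℝ) ≤ α)
      linarith
    have b3 : β * t₂ ^ (β - 1) * t₁ ^ α * s ≤ β * L₂ ^ (α + β - 1) * s ^ 2 := by
      have h := mul_le_mul m3 hss hs (Real.rpow_nonneg hL₂.le _)
      have h' := mul_le_mul_of_nonneg_left h (by linarith : (0:ℝ) ≤ β)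
      linarith
    have q : min 1 ((α + β) * L₁) * s ^ (α + β - 1)
        ≤ (α * t₁ + β * t₂) * s ^ (α + β - 1) := by
      have hm : min 1 ((α + β) * L₁) ≤ α * t₁ + β * t₂ := by
        have := min_le_right 1 ((α + β) * L₁)
        nlinarith [mul_le_mul_of_nonneg_left h1l (by linarith : (0:ℝ) ≤ α),
          mul_le_mul_of_nonneg_left h2l (by linarith : (0:ℝ) ≤ β)]
      exact mul_le_mul_of_nonneg_right hm (Real.rpow_nonneg hs _)
    nlinarith [hlow, q, b1, b2, b3]
end

section
/- Let α, β > 1 be real numbers. Then for all nonnegative real numbers t₁, t₂, s₁, s₂: (t₁+t₂)^α·(s₁+s₂)^β − t₁^α·s₁^β − α·t₁^(α−1)·s₁^β·t₂ − β·t₁^α·s₁^(β−1)·s₂ − t₂^α·s₂^β ≥ 0. -/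
/-!
Write `F t s = t ^ α * s ^ β` and follow `F` along the segment from `(t₁, s₁)` to
`(t₁ + t₂, s₁ + s₂)`. The partial derivatives of `F` are products of powers of total degree
`α + β - 1 ≥ 1`, and such products are superadditive (two-term Hölder, then
`x ^ p + y ^ p ≤ (x + y) ^ p`). So at time `r` the derivative of `r ↦ F (t₁ + r t₂) (s₁ + r s₂)`
is at least `∇F (t₁, s₁) · (t₂, s₂) + (α + β) r ^ (α + β - 1) F t₂ s₂`, which is the derivative
of `r ↦ r ∇F (t₁, s₁) · (t₂, s₂) + r ^ (α + β) F t₂ s₂`; comparing the two at `r = 0` and `r = 1`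
gives the inequality.
-/

open Real

lemma rpow_mul_rpow_add_rpow_mul_rpow_le_of_add_eq_one {p q a b c d : ℝ} (hp : 0 < p)
    (hq : 0 < q) (hpq : p + q = 1) (ha : 0 ≤ a) (hb : 0 ≤ b) (hc : 0 ≤ c) (hd : 0 ≤ d) :
    a ^ p * c ^ q + b ^ p * d ^ q ≤ (a + b) ^ p * (c + d) ^ q := by
  have holder := inner_le_Lp_mul_Lq_of_nonneg Finset.univ (holderConjugate_one_div hp hq hpq)
    (f := ![a ^ p, b ^ p]) (g := ![c ^ q, d ^ q])
    (by simp [Fin.forall_fin_two, rpow_nonneg, *]) (by simp [Fin.forall_fin_two, rpow_nonneg, *])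
  have hp' : p ≠ 0 := hp.ne'
  have hq' : q ≠ 0 := hq.ne'
  simpa [Fin.sum_univ_two, ← rpow_mul, ha, hb, hc, hd, hp', hq'] using holder

lemma rpow_mul_rpow_add_rpow_mul_rpow_le_of_one_le_add {p q a b c d : ℝ} (hp : 0 < p)
    (hq : 0 < q) (hpq : 1 ≤ p + q) (ha : 0 ≤ a) (hb : 0 ≤ b) (hc : 0 ≤ c) (hd : 0 ≤ d) :
    a ^ p * c ^ q + b ^ p * d ^ q ≤ (a + b) ^ p * (c + d) ^ q := by
  set s := p + q
  have hs : s ≠ 0 := by positivity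
  have scale : ∀ {x y : ℝ}, 0 ≤ x → 0 ≤ y → (x ^ (p / s) * y ^ (q / s)) ^ s = x ^ p * y ^ q :=
    fun hx hy ↦ by
      rw [mul_rpow (by positivity) (by positivity), ← rpow_mul hx, ← rpow_mul hy,
        div_mul_cancel₀ _ hs, div_mul_cancel₀ _ hs]
  rw [← scale ha hc, ← scale hb hd, ← scale (by positivity) (by positivity)]
  calc _ ≤ (a ^ (p / s) * c ^ (q / s) + b ^ (p / s) * d ^ (q / s)) ^ s :=
        add_rpow_le_rpow_add (by positivity) (by positivity) hpq
    _ ≤ _ := by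
        gcongr
        exact rpow_mul_rpow_add_rpow_mul_rpow_le_of_add_eq_one (by positivity) (by positivity)
          (by rw [← add_div, div_self hs]) ha hb hc hd

lemma rpow_mul_rpow_add_mul_rpow_mul_rpow_le {p q a b c d r : ℝ} (hp : 0 < p) (hq : 0 < q)
    (hpq : 1 ≤ p + q) (ha : 0 ≤ a) (hb : 0 ≤ b) (hc : 0 ≤ c) (hd : 0 ≤ d) (hr : 0 ≤ r) :
    a ^ p * c ^ q + r ^ (p + q) * (b ^ p * d ^ q) ≤ (a + r * b) ^ p * (c + r * d) ^ q := by
  have homog : (r * b) ^ p * (r * d) ^ q = r ^ (p + q) * (b ^ p * d ^ q) := by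
    rw [mul_rpow hr hb, mul_rpow hr hd, rpow_add' hr (by positivity)]
    ring
  rw [← homog]
  exact rpow_mul_rpow_add_rpow_mul_rpow_le_of_one_le_add hp hq hpq ha (by positivity) hc
    (by positivity)

lemma hasDerivAt_rpow_mul_rpow_line {α β t₁ t₂ s₁ s₂ : ℝ} (hα : 1 ≤ α) (hβ : 1 ≤ β) (r : ℝ) :
    HasDerivAt (fun r ↦ (t₁ + r * t₂) ^ α * (s₁ + r * s₂) ^ β)
      (α * t₂ * (t₁ + r * t₂) ^ (α - 1) * (s₁ + r * s₂) ^ β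
        + β * s₂ * (t₁ + r * t₂) ^ α * (s₁ + r * s₂) ^ (β - 1)) r := by
  have ht : HasDerivAt (fun r ↦ t₁ + r * t₂) t₂ r := by
    simpa using ((hasDerivAt_id r).mul_const t₂).const_add t₁
  have hs : HasDerivAt (fun r ↦ s₁ + r * s₂) s₂ r := by
    simpa using ((hasDerivAt_id r).mul_const s₂).const_add s₁
  exact ((ht.rpow_const (Or.inr hα)).mul (hs.rpow_const (Or.inr hβ))).congr_deriv (by ring)

lemma le_deriv_rpow_mul_rpow_line {α β t₁ t₂ s₁ s₂ r : ℝ} (hα : 1 < α) (hβ : 1 < β)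
    (ht₁ : 0 ≤ t₁) (ht₂ : 0 ≤ t₂) (hs₁ : 0 ≤ s₁) (hs₂ : 0 ≤ s₂) (hr : 0 ≤ r) :
    α * t₁ ^ (α - 1) * s₁ ^ β * t₂ + β * t₁ ^ α * s₁ ^ (β - 1) * s₂
        + (α + β) * r ^ (α + β - 1) * (t₂ ^ α * s₂ ^ β)
      ≤ α * t₂ * (t₁ + r * t₂) ^ (α - 1) * (s₁ + r * s₂) ^ β
        + β * s₂ * (t₁ + r * t₂) ^ α * (s₁ + r * s₂) ^ (β - 1) := by
  have hT := rpow_mul_rpow_add_mul_rpow_mul_rpow_le (q := β) (sub_pos.2 hα) (by linarith)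
    (by linarith) ht₁ ht₂ hs₁ hs₂ hr
  have hS := rpow_mul_rpow_add_mul_rpow_mul_rpow_le (p := α) (by linarith) (sub_pos.2 hβ)
    (by linarith) ht₁ ht₂ hs₁ hs₂ hr
  have ht : t₂ * t₂ ^ (α - 1) = t₂ ^ α := by
    rw [← rpow_one_add' ht₂ (by linarith), add_sub_cancel]
  have hs : s₂ * s₂ ^ (β - 1) = s₂ ^ β := by
    rw [← rpow_one_add' hs₂ (by linarith), add_sub_cancel]
  rw [show α - 1 + β = α + β - 1 by ring] at hT
  rw [show α + (β - 1) = α + β - 1 by ring] at hS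
  calc _ = α * t₂ * (t₁ ^ (α - 1) * s₁ ^ β + r ^ (α + β - 1) * (t₂ ^ (α - 1) * s₂ ^ β))
        + β * s₂ * (t₁ ^ α * s₁ ^ (β - 1) + r ^ (α + β - 1) * (t₂ ^ α * s₂ ^ (β - 1))) := by
        linear_combination -(α * r ^ (α + β - 1) * s₂ ^ β) * ht
          - (β * r ^ (α + β - 1) * t₂ ^ α) * hs
    _ ≤ _ := by
        rw [mul_assoc _ (_ ^ _), mul_assoc _ (_ ^ _)]
        gcongr

/-- For `α, β > 1` and nonnegative `t₁, t₂, s₁, s₂`,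
`(t₁+t₂)^α (s₁+s₂)^β - t₁^α s₁^β - α t₁^(α-1) s₁^β t₂ - β t₁^α s₁^(β-1) s₂ - t₂^α s₂^β ≥ 0`. -/
theorem interaction_nonneg
    (α β : ℝ) (hα : 1 < α) (hβ : 1 < β) :
    ∀ t₁ t₂ s₁ s₂ : ℝ, 0 ≤ t₁ → 0 ≤ t₂ → 0 ≤ s₁ → 0 ≤ s₂ →
      (t₁ + t₂) ^ α * (s₁ + s₂) ^ β - t₁ ^ α * s₁ ^ β
          - α * t₁ ^ (α - 1) * s₁ ^ β * t₂ - β * t₁ ^ α * s₁ ^ (β - 1) * s₂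
          - t₂ ^ α * s₂ ^ β ≥ 0 := by
  intro t₁ t₂ s₁ s₂ ht₁ ht₂ hs₁ hs₂
  set C := α * t₁ ^ (α - 1) * s₁ ^ β * t₂ + β * t₁ ^ α * s₁ ^ (β - 1) * s₂
  set D := t₂ ^ α * s₂ ^ β
  set g : ℝ → ℝ := fun r ↦ (t₁ + r * t₂) ^ α * (s₁ + r * s₂) ^ β - C * r - D * r ^ (α + β)
  have hg : ∀ r, HasDerivAt g (α * t₂ * (t₁ + r * t₂) ^ (α - 1) * (s₁ + r * s₂) ^ β
      + β * s₂ * (t₁ + r * t₂) ^ α * (s₁ + r * s₂) ^ (β - 1)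
      - C - D * ((α + β) * r ^ (α + β - 1))) r := fun r ↦
    (((hasDerivAt_rpow_mul_rpow_line hα.le hβ.le r).sub ((hasDerivAt_id r).const_mul C)).sub
      ((hasDerivAt_rpow_const (Or.inr (by linarith))).const_mul D)).congr_deriv (by ring)
  have hmono : MonotoneOn g (Set.Ici 0) := by
    refine monotoneOn_of_hasDerivWithinAt_nonneg (convex_Ici 0)
      (HasDerivAt.continuousOn fun r _ ↦ hg r) (fun r _ ↦ (hg r).hasDerivWithinAt) ?_
    intro r hr
    rw [interior_Ici] at hr
    linarith [le_deriv_rpow_mul_rpow_line hα hβ ht₁ ht₂ hs₁ hs₂ (le_of_lt hr)]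
  have hg0 : g 0 = t₁ ^ α * s₁ ^ β := by simp [g, zero_rpow (by linarith : α + β ≠ 0)]
  have hg1 : g 1 = (t₁ + t₂) ^ α * (s₁ + s₂) ^ β - C - D := by simp [g]
  linarith [hmono Set.self_mem_Ici (Set.mem_Ici.2 zero_le_one) zero_le_one]
end

section
/- Let α, β > 1 be real numbers. Then for all t, s ∈ [0,1]: t^α·s^β + α·t^(α−1)·(1−t)·s^β + β·t^α·s^(β−1)·(1−s) + (1−t)^α·(1−s)^β ≤ 1. -/
/-!
Write `a = t^α`, `b = s^β` for the "diagonal" weights. Both off-diagonal terms in `t` are at most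
`1 - a`: the tangent line of the convex map `x ↦ x^α` at `t` lies below the graph at `1`, which gives
`α t^(α-1) (1-t) ≤ 1 - t^α`, and superadditivity of `x ↦ x^α` gives `(1-t)^α ≤ 1 - t^α`. The same holds
in `s`, so the left-hand side is at most `ab + (1-a)b + a(1-b) + (1-a)(1-b) = 1`.
-/

namespace Real

/-- Combines `q log x ≤ q (x - 1)` with `1 + q (1 - x) ≤ exp (q (1 - x))`. -/
lemma rpow_mul_one_add_mul_one_sub_le_one {x q : ℝ} (hx : 0 ≤ x) (hq : 0 ≤ q) :
    x ^ q * (1 + q * (1 - x)) ≤ 1 := by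
  have hpow : x ^ q ≤ exp (q * (x - 1)) := by
    rw [mul_comm, exp_mul]
    exact rpow_le_rpow hx (by linarith [add_one_le_exp (x - 1)]) hq
  calc x ^ q * (1 + q * (1 - x))
      ≤ x ^ q * exp (q * (1 - x)) := by
        gcongr
        linarith [add_one_le_exp (q * (1 - x))]
    _ ≤ exp (q * (x - 1)) * exp (q * (1 - x)) := by gcongr
    _ = 1 := by rw [← exp_add]; ring_nf; exact exp_zero

lemma rpow_add_mul_rpow_sub_one_mul_one_sub_le_one {x p : ℝ} (hx : 0 ≤ x) (hp : 1 ≤ p) :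
    x ^ p + p * x ^ (p - 1) * (1 - x) ≤ 1 := by
  have hsplit : x ^ p = x ^ (p - 1) * x := by
    conv_lhs => rw [← sub_add_cancel p 1]
    rw [rpow_add' hx (by linarith), rpow_one]
  calc x ^ p + p * x ^ (p - 1) * (1 - x)
      = x ^ (p - 1) * (1 + (p - 1) * (1 - x)) := by rw [hsplit]; ring
    _ ≤ 1 := rpow_mul_one_add_mul_one_sub_le_one hx (by linarith)

lemma one_sub_rpow_le_one_sub_rpow {x p : ℝ} (hx₀ : 0 ≤ x) (hx₁ : x ≤ 1) (hp : 1 ≤ p) :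
    (1 - x) ^ p ≤ 1 - x ^ p := by
  have := add_rpow_le_rpow_add hx₀ (sub_nonneg.2 hx₁) hp
  rw [add_sub_cancel, one_rpow] at this
  linarith

end Real

lemma mul_add_mul_add_mul_add_mul_le_one {a b u v w z : ℝ} (ha : 0 ≤ a) (hb : 0 ≤ b)
    (hw : 0 ≤ w) (hz : 0 ≤ z) (hu : u ≤ 1 - a) (hv : v ≤ 1 - b) (hwa : w ≤ 1 - a)
    (hzb : z ≤ 1 - b) :
    a * b + u * b + a * v + w * z ≤ 1 := by
  linarith [mul_le_mul_of_nonneg_right hu hb, mul_le_mul_of_nonneg_left hv ha,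
    mul_le_mul hwa hzb hz (hw.trans hwa)]

/-- Normalized interaction inequality: for `α, β > 1` and `t, s ∈ [0,1]`,
`t^α s^β + α t^(α-1) (1-t) s^β + β t^α s^(β-1) (1-s) + (1-t)^α (1-s)^β ≤ 1`. -/
theorem normalized_interaction_le_one
    (α β : ℝ) (hα : 1 < α) (hβ : 1 < β) :
    ∀ t s : ℝ, t ∈ Set.Icc (0 : ℝ) 1 → s ∈ Set.Icc (0 : ℝ) 1 →
      t ^ α * s ^ β + α * t ^ (α - 1) * (1 - t) * s ^ β
          + β * t ^ α * s ^ (β - 1) * (1 - s) + (1 - t) ^ α * (1 - s) ^ β ≤ 1 := by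
  rintro t s ⟨ht₀, ht₁⟩ ⟨hs₀, hs₁⟩
  have htangent_t := Real.rpow_add_mul_rpow_sub_one_mul_one_sub_le_one ht₀ hα.le
  have htangent_s := Real.rpow_add_mul_rpow_sub_one_mul_one_sub_le_one hs₀ hβ.le
  have key := mul_add_mul_add_mul_add_mul_le_one (u := α * t ^ (α - 1) * (1 - t))
    (v := β * s ^ (β - 1) * (1 - s)) (Real.rpow_nonneg ht₀ α) (Real.rpow_nonneg hs₀ β)
    (Real.rpow_nonneg (sub_nonneg.2 ht₁) α) (Real.rpow_nonneg (sub_nonneg.2 hs₁) β)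
    (by linarith) (by linarith)
    (Real.one_sub_rpow_le_one_sub_rpow ht₀ ht₁ hα.le)
    (Real.one_sub_rpow_le_one_sub_rpow hs₀ hs₁ hβ.le)
  linarith
end

section
/- Let 0 < L₁ ≤ L₂ < ∞ and let η > 2 be real. Then there exists a constant A > 0 such that for all t ∈ [L₁, L₂] and all s ≥ 0: (t+s)^η − t^η − η·t^(η−1)·s ≥ A·s^η. -/
open Real Set

/-- Superadditivity of rpow for exponent ≥ 1 on nonnegative reals. -/
lemma real_add_rpow_le {x y p : ℝ} (hx : 0 ≤ x) (hy : 0 ≤ y) (hp : 1 ≤ p) :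
    x ^ p + y ^ p ≤ (x + y) ^ p := by
  lift x to NNReal using hx
  lift y to NNReal using hy
  have := NNReal.add_rpow_le_rpow_add x y hp
  exact_mod_cast this

lemma key_lemma {η : ℝ} (hη : 2 < η) {t : ℝ} (ht : 0 < t) :
    ∀ s : ℝ, 0 ≤ s → t ^ η + η * t ^ (η - 1) * s + s ^ η ≤ (t + s) ^ η := by
  set f : ℝ → ℝ := fun s => (t + s) ^ η - η * t ^ (η - 1) * s - s ^ η with hf
  have hη1 : (1 : ℝ) ≤ η := by linarith
  have hη1' : (1 : ℝ) ≤ η - 1 := by linarith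
  have hderiv : ∀ s : ℝ, 0 ≤ s →
      HasDerivAt f (η * (t + s) ^ (η - 1) - η * t ^ (η - 1) - η * s ^ (η - 1)) s := by
    intro s hs
    have h1 : HasDerivAt (fun s : ℝ => (t + s) ^ η) (1 * η * (t + s) ^ (η - 1)) s :=
      ((hasDerivAt_id s).const_add t).rpow_const (Or.inr hη1)
    have h2 : HasDerivAt (fun s : ℝ => s ^ η) (1 * η * s ^ (η - 1)) s :=
      (hasDerivAt_id s).rpow_const (Or.inr hη1)
    have h3 : HasDerivAt (fun s : ℝ => η * t ^ (η - 1) * s) (η * t ^ (η - 1)) s := by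
      simpa using (hasDerivAt_id s).const_mul (η * t ^ (η - 1))
    have h4 := (h1.sub h3).sub h2
    simp only [one_mul] at h4
    exact h4
  have hmono : MonotoneOn f (Ici (0 : ℝ)) := by
    apply monotoneOn_of_deriv_nonneg (convex_Ici 0)
    · exact fun s hs => ((hderiv s hs).continuousAt).continuousWithinAt
    · intro s hs
      rw [interior_Ici] at hs
      exact ((hderiv s hs.le).differentiableAt).differentiableWithinAt
    · intro s hs
      rw [interior_Ici] at hs
      rw [(hderiv s hs.le).deriv]
      have hsup : t ^ (η - 1) + s ^ (η - 1) ≤ (t + s) ^ (η - 1) :=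
        real_add_rpow_le ht.le hs.le hη1'
      nlinarith [hsup, hη]
  intro s hs
  have h0 : f 0 = t ^ η := by
    simp [hf, Real.zero_rpow (by linarith : η ≠ 0)]
  have := hmono (self_mem_Ici) hs hs
  rw [h0] at this
  simp only [hf] at this
  linarith

/-- For `0 < L₁ ≤ L₂` and `η > 2`, there is `A > 0` with
`(t+s)^η - t^η - η t^(η-1) s ≥ A s^η` for all `t ∈ [L₁, L₂]` and `s ≥ 0`. -/
theorem taylor_remainder_lower_bound
    (L₁ L₂ η : ℝ) (hL₁ : 0 < L₁) (hL : L₁ ≤ L₂) (hη : 2 < η) :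
    ∃ A : ℝ, 0 < A ∧
      ∀ t s : ℝ, t ∈ Set.Icc L₁ L₂ → 0 ≤ s →
        (t + s) ^ η - t ^ η - η * t ^ (η - 1) * s ≥ A * s ^ η := by
  refine ⟨1, one_pos, fun t s ht hs => ?_⟩
  have := key_lemma hη (lt_of_lt_of_le hL₁ ht.1) s hs
  linarith
end

section
/- Let N ≥ 3 be an integer, S > 0, ν > 0, and α, β > 1 real numbers with α + β = 2N/(N−2). Suppose ξ₁, ξ₂, η₁, η₂, η₃ are nonnegative real numbers satisfying: η₁^((N−2)/N) ≤ S⁻¹·ξ₁, η₂^((N−2)/N) ≤ S⁻¹·ξ₂, η₃ ≤ η₁^(α(N−2)/(2N))·η₂^(β(N−2)/(2N)), ξ₁ = ν·α·η₃, ξ₂ = ν·β·η₃, and η₃ > 0. Then η₃ ≥ ν^(−N/2)·α^(−(N−2)α/4)·β^(−(N−2)β/4)·S^(N/2), and consequently (1/2)·(ξ₁+ξ₂) − ν·η₃ = (2/(N−2))·ν·η₃ ≥ (2/(N−2))·ν^(−(N−2)/2)·α^(−(N−2)α/4)·β^(−(N−2)β/4)·S^(N/2). -/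
/-- Minimal energy contribution of a concentration point: if `ξ₁, ξ₂, η₁, η₂, η₃ ≥ 0`
satisfy the Sobolev and Hölder relations together with `ξ₁ = ναη₃`, `ξ₂ = νβη₃` and
`η₃ > 0`, then `η₃ ≥ ν^(-N/2) α^(-(N-2)α/4) β^(-(N-2)β/4) S^(N/2)` and the energy
contribution `(ξ₁+ξ₂)/2 - νη₃ = (2/(N-2)) ν η₃` is at least
`(2/(N-2)) ν^(-(N-2)/2) α^(-(N-2)α/4) β^(-(N-2)β/4) S^(N/2)`. -/
theorem concentration_energy_lower_bound
    (N : ℕ) (hN : 3 ≤ N) (S ν α β ξ₁ ξ₂ η₁ η₂ η₃ : ℝ)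
    (hS : 0 < S) (hν : 0 < ν) (hα : 1 < α) (hβ : 1 < β)
    (hαβ : α + β = 2 * (N : ℝ) / ((N : ℝ) - 2))
    (hξ₁ : 0 ≤ ξ₁) (hξ₂ : 0 ≤ ξ₂) (hη₁ : 0 ≤ η₁) (hη₂ : 0 ≤ η₂) (hη₃ : 0 < η₃)
    (hSob₁ : η₁ ^ (((N : ℝ) - 2) / (N : ℝ)) ≤ S⁻¹ * ξ₁)
    (hSob₂ : η₂ ^ (((N : ℝ) - 2) / (N : ℝ)) ≤ S⁻¹ * ξ₂)
    (hHold : η₃ ≤ η₁ ^ (α * ((N : ℝ) - 2) / (2 * (N : ℝ))) *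
      η₂ ^ (β * ((N : ℝ) - 2) / (2 * (N : ℝ))))
    (hrel₁ : ξ₁ = ν * α * η₃) (hrel₂ : ξ₂ = ν * β * η₃) :
    η₃ ≥ ν ^ (-(N : ℝ) / 2) * α ^ (-(((N : ℝ) - 2) * α) / 4) *
      β ^ (-(((N : ℝ) - 2) * β) / 4) * S ^ ((N : ℝ) / 2) ∧
    (1 / 2) * (ξ₁ + ξ₂) - ν * η₃ = (2 / ((N : ℝ) - 2)) * ν * η₃ ∧
    (2 / ((N : ℝ) - 2)) * ν * η₃ ≥
      (2 / ((N : ℝ) - 2)) * ν ^ (-((N : ℝ) - 2) / 2) *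
        α ^ (-(((N : ℝ) - 2) * α) / 4) * β ^ (-(((N : ℝ) - 2) * β) / 4) *
        S ^ ((N : ℝ) / 2) := by
  have hN3 : (3 : ℝ) ≤ (N : ℝ) := by exact_mod_cast hN
  have hNpos : (0 : ℝ) < (N : ℝ) := by linarith
  have ha : (0 : ℝ) < (N : ℝ) - 2 := by linarith
  have hα0 : (0 : ℝ) < α := by linarith
  have hβ0 : (0 : ℝ) < β := by linarith
  have hαβ' : ((N : ℝ) - 2) * (α + β) = 2 * (N : ℝ) := by
    field_simp at hαβ
    linarith [hαβ]
  -- positivity of η₁, η₂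
  have hη₁pos : 0 < η₁ := by
    rcases hη₁.lt_or_eq with h | h
    · exact h
    · exfalso
      rw [← h, Real.zero_rpow (by positivity : α * ((N : ℝ) - 2) / (2 * (N : ℝ)) ≠ 0),
        zero_mul] at hHold
      linarith
  have hη₂pos : 0 < η₂ := by
    rcases hη₂.lt_or_eq with h | h
    · exact h
    · exfalso
      rw [← h, Real.zero_rpow (by positivity : β * ((N : ℝ) - 2) / (2 * (N : ℝ)) ≠ 0),
        mul_zero] at hHold
      linarith
  have hξ₁pos : 0 < ξ₁ := by rw [hrel₁]; positivity
  have hξ₂pos : 0 < ξ₂ := by rw [hrel₂]; positivity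
  set X := Real.log η₁
  set Y := Real.log η₂
  set Z := Real.log η₃
  set LS := Real.log S
  set Lν := Real.log ν
  set Lα := Real.log α
  set Lβ := Real.log β
  -- log version of Sobolev inequalities
  have hlog1 : Real.log (S⁻¹ * (ν * α * η₃)) = -LS + (Lν + Lα + Z) := by
    rw [Real.log_mul (inv_ne_zero hS.ne') (show ν * α * η₃ ≠ 0 by positivity),
      Real.log_mul (show ν * α ≠ 0 by positivity) hη₃.ne',
      Real.log_mul hν.ne' hα0.ne', Real.log_inv]
  have hlog2 : Real.log (S⁻¹ * (ν * β * η₃)) = -LS + (Lν + Lβ + Z) := by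
    rw [Real.log_mul (inv_ne_zero hS.ne') (show ν * β * η₃ ≠ 0 by positivity),
      Real.log_mul (show ν * β ≠ 0 by positivity) hη₃.ne',
      Real.log_mul hν.ne' hβ0.ne', Real.log_inv]
  have l1 : (((N : ℝ) - 2) / (N : ℝ)) * X ≤ -LS + (Lν + Lα + Z) := by
    have h := Real.log_le_log (Real.rpow_pos_of_pos hη₁pos _) hSob₁
    rw [Real.log_rpow hη₁pos, hrel₁, hlog1] at h
    linarith
  have l2 : (((N : ℝ) - 2) / (N : ℝ)) * Y ≤ -LS + (Lν + Lβ + Z) := by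
    have h := Real.log_le_log (Real.rpow_pos_of_pos hη₂pos _) hSob₂
    rw [Real.log_rpow hη₂pos, hrel₂, hlog2] at h
    linarith
  -- log version of Hölder
  have l3 : Z ≤ (α * ((N : ℝ) - 2) / (2 * (N : ℝ))) * X +
      (β * ((N : ℝ) - 2) / (2 * (N : ℝ))) * Y := by
    have h := Real.log_le_log hη₃ hHold
    rw [Real.log_mul (Real.rpow_pos_of_pos hη₁pos _).ne' (Real.rpow_pos_of_pos hη₂pos _).ne',
      Real.log_rpow hη₁pos, Real.log_rpow hη₂pos] at h
    linarith
  -- combine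
  have l1' : (α / 2) * ((((N : ℝ) - 2) / (N : ℝ)) * X) ≤ (α / 2) * (-LS + (Lν + Lα + Z)) :=
    mul_le_mul_of_nonneg_left l1 (by positivity)
  have l2' : (β / 2) * ((((N : ℝ) - 2) / (N : ℝ)) * Y) ≤ (β / 2) * (-LS + (Lν + Lβ + Z)) :=
    mul_le_mul_of_nonneg_left l2 (by positivity)
  have key : Z ≤ (α / 2) * (-LS + (Lν + Lα + Z)) + (β / 2) * (-LS + (Lν + Lβ + Z)) := by
    calc Z ≤ (α * ((N : ℝ) - 2) / (2 * (N : ℝ))) * X +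
        (β * ((N : ℝ) - 2) / (2 * (N : ℝ))) * Y := l3
      _ = (α / 2) * ((((N : ℝ) - 2) / (N : ℝ)) * X) +
          (β / 2) * ((((N : ℝ) - 2) / (N : ℝ)) * Y) := by ring
      _ ≤ _ := add_le_add l1' l2'
  have key2 : ((N : ℝ) - 2) * Z ≤ ((N : ℝ) - 2) *
      ((α / 2) * (-LS + (Lν + Lα + Z)) + (β / 2) * (-LS + (Lν + Lβ + Z))) :=
    mul_le_mul_of_nonneg_left key ha.le
  have key3 : ((N : ℝ) - 2) * Z ≤ (N : ℝ) * (-LS + Lν + Z) +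
      (((N : ℝ) - 2) * α / 2) * Lα + (((N : ℝ) - 2) * β / 2) * Lβ := by
    have e : ((N : ℝ) - 2) *
        ((α / 2) * (-LS + (Lν + Lα + Z)) + (β / 2) * (-LS + (Lν + Lβ + Z))) =
        (N : ℝ) * (-LS + Lν + Z) +
        (((N : ℝ) - 2) * α / 2) * Lα + (((N : ℝ) - 2) * β / 2) * Lβ := by
      linear_combination ((-LS + Lν + Z) / 2) * hαβ'
    linarith [e ▸ key2]
  -- the log lower bound for η₃
  have logbound : (-(N : ℝ) / 2) * Lν + (-(((N : ℝ) - 2) * α) / 4) * Lα +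
      (-(((N : ℝ) - 2) * β) / 4) * Lβ + ((N : ℝ) / 2) * LS ≤ Z := by
    linarith
  -- first claim
  have hT : (0 : ℝ) < ν ^ (-(N : ℝ) / 2) * α ^ (-(((N : ℝ) - 2) * α) / 4) *
      β ^ (-(((N : ℝ) - 2) * β) / 4) * S ^ ((N : ℝ) / 2) := by positivity
  have claim1 : η₃ ≥ ν ^ (-(N : ℝ) / 2) * α ^ (-(((N : ℝ) - 2) * α) / 4) *
      β ^ (-(((N : ℝ) - 2) * β) / 4) * S ^ ((N : ℝ) / 2) := by
    rw [ge_iff_le, ← Real.log_le_log_iff hT hη₃]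
    rw [Real.log_mul (by positivity) (by positivity), Real.log_mul (by positivity) (by positivity),
      Real.log_mul (by positivity) (by positivity), Real.log_rpow hν, Real.log_rpow hα0,
      Real.log_rpow hβ0, Real.log_rpow hS]
    linarith [logbound]
  refine ⟨claim1, ?_, ?_⟩
  · rw [hrel₁, hrel₂]
    field_simp
    linear_combination hαβ'
  · have hc : (0 : ℝ) < 2 / ((N : ℝ) - 2) * ν := by positivity
    have h := mul_le_mul_of_nonneg_left claim1 hc.le
    have e : ν * (ν ^ (-(N : ℝ) / 2)) = ν ^ (-((N : ℝ) - 2) / 2) := by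
      rw [show -((N : ℝ) - 2) / 2 = 1 + (-(N : ℝ) / 2) by ring, Real.rpow_add hν,
        Real.rpow_one]
    calc (2 / ((N : ℝ) - 2)) * ν ^ (-((N : ℝ) - 2) / 2) *
        α ^ (-(((N : ℝ) - 2) * α) / 4) * β ^ (-(((N : ℝ) - 2) * β) / 4) * S ^ ((N : ℝ) / 2)
        = 2 / ((N : ℝ) - 2) * ν * (ν ^ (-(N : ℝ) / 2) * α ^ (-(((N : ℝ) - 2) * α) / 4) *
          β ^ (-(((N : ℝ) - 2) * β) / 4) * S ^ ((N : ℝ) / 2)) := by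
          rw [← e]; ring
      _ ≤ 2 / ((N : ℝ) - 2) * ν * η₃ := h
end

section
/- Let N ≥ 3 be an integer, set A_N := (N(N−2))^((N−2)/4), and for each integer n ≥ 1 define U_n : ℝ^N → ℝ by U_n(x) = A_N·(n/(1+n²|x|²))^((N−2)/2) if |x| < 1, U_n(x) = A_N·(n/(1+n²))^((N−2)/2)·(2−|x|) if 1 ≤ |x| < 2, and U_n(x) = 0 if |x| ≥ 2. Let η be a real number with 1 ≤ η < 2N/(N−2) and η ≠ N/(N−2), and set m := min{(N−2)η/2, N − (N−2)η/2}. Then there exist constants c, C > 0 such that for all integers n ≥ 1: c·n^(−m) ≤ ∫_{ℝ^N} U_n(x)^η dx ≤ C·n^(−m). -/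
open MeasureTheory Set

set_option maxHeartbeats 1000000

/-- The truncated Aubin–Talenti bubble `U_n` in dimension `N`. -/
noncomputable def truncatedBubble (N n : ℕ) (x : EuclideanSpace ℝ (Fin N)) : ℝ :=
  if ‖x‖ < 1 then
    ((N : ℝ) * ((N : ℝ) - 2)) ^ (((N : ℝ) - 2) / 4) *
      ((n : ℝ) / (1 + (n : ℝ) ^ 2 * ‖x‖ ^ 2)) ^ (((N : ℝ) - 2) / 2)
  else if ‖x‖ < 2 then
    ((N : ℝ) * ((N : ℝ) - 2)) ^ (((N : ℝ) - 2) / 4) *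
      ((n : ℝ) / (1 + (n : ℝ) ^ 2)) ^ (((N : ℝ) - 2) / 2) * (2 - ‖x‖)
  else 0

/-! ## Auxiliary 1-D lemmas -/

/-- value of `∫ r in Ioc 0 b, r ^ (N-1)` -/
lemma TB_int_pow_Ioc (N : ℕ) (hN : 1 ≤ N) {b : ℝ} (hb : 0 ≤ b) :
    ∫ r in Ioc (0:ℝ) b, r ^ (N - 1) = b ^ N / N := by
  have hc : ((N - 1 : ℕ) : ℝ) + 1 = N := by
    push_cast [Nat.cast_sub hN]; ring
  rw [← intervalIntegral.integral_of_le hb, integral_pow, Nat.sub_add_cancel hN,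
    zero_pow (by omega), sub_zero, hc]

lemma TB_int_pow_Ioc' (N : ℕ) (hN : 1 ≤ N) {x b : ℝ} (hb : x ≤ b) :
    ∫ r in Ioc x b, r ^ (N - 1) = (b ^ N - x ^ N) / N := by
  have hc : ((N - 1 : ℕ) : ℝ) + 1 = N := by
    push_cast [Nat.cast_sub hN]; ring
  rw [← intervalIntegral.integral_of_le hb, integral_pow, Nat.sub_add_cancel hN, hc]

lemma TB_int_rpow_Ioc {x b s : ℝ} (hx : 0 < x) (hb : x ≤ b) (hs : s ≠ -1) :
    ∫ r in Ioc x b, r ^ s = (b ^ (s + 1) - x ^ (s + 1)) / (s + 1) := by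
  rw [← intervalIntegral.integral_of_le hb]
  apply integral_rpow
  refine Or.inr ⟨hs, fun h => ?_⟩
  rw [Set.uIcc_of_le hb] at h
  exact absurd h.1 (not_le.mpr hx)

lemma TB_integrableOn_rpow_Ioc {x b s : ℝ} (hx : 0 < x) (hb : x ≤ b) :
    IntegrableOn (fun r : ℝ => r ^ s) (Ioc x b) := by
  have h := intervalIntegral.intervalIntegrable_rpow (μ := volume) (a := x) (b := b) (r := s)
    (Or.inr (fun h => by rw [Set.uIcc_of_le hb] at h; exact absurd h.1 (not_le.mpr hx)))
  exact h.1

/-! ## The model integrand on the unit ball -/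

/-- The model integrand on the unit interval. -/
noncomputable def Gmod (N n : ℕ) (a α : ℝ) (r : ℝ) : ℝ :=
  r ^ (N - 1) * (a * ((n : ℝ) ^ α * (1 + (n : ℝ) ^ 2 * r ^ 2) ^ (-α)))

lemma Gmod_cont (N n : ℕ) (a α : ℝ) : Continuous (Gmod N n a α) := by
  unfold Gmod
  apply Continuous.mul (continuous_pow _)
  apply Continuous.mul continuous_const
  apply Continuous.mul continuous_const
  apply Continuous.rpow_const
  · continuity
  · intro x
    left
    positivity

lemma Gmod_nonneg (N n : ℕ) {a : ℝ} (ha : 0 ≤ a) (α : ℝ) {r : ℝ} (hr : 0 ≤ r) :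
    0 ≤ Gmod N n a α r := by
  unfold Gmod
  have h1 : (0:ℝ) ≤ (n:ℝ) ^ α := Real.rpow_nonneg (Nat.cast_nonneg n) _
  have h2 : (0:ℝ) ≤ (1 + (n : ℝ) ^ 2 * r ^ 2) ^ (-α) := Real.rpow_nonneg (by positivity) _
  positivity

lemma Gmod_integrableOn (N n : ℕ) (a α : ℝ) {s : Set ℝ} {x y : ℝ} (hs : s ⊆ Ioc x y) :
    IntegrableOn (Gmod N n a α) s :=
  ((Gmod_cont N n a α).integrableOn_Ioc).mono_set hs

/-- Key exponent arithmetic : `n^α * n^(-(2α)) = n^(-α)` etc. -/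
lemma TB_sq_rpow {x : ℝ} (hx : 0 ≤ x) (α : ℝ) : (x ^ 2) ^ (-α) = x ^ (-(2*α)) := by
  rw [← Real.rpow_natCast x 2, ← Real.rpow_mul hx]
  norm_num

/-- Upper bound for the integral of the model integrand over `(0,1]`. -/
lemma Gmod_upper (N : ℕ) (hN : 3 ≤ N) {a α : ℝ} (ha : 0 < a) (hα : 0 < α)
    (hαN : α < N) (hne : 2 * α ≠ (N : ℝ)) :
    ∃ C : ℝ, 0 < C ∧ ∀ n : ℕ, 1 ≤ n →
      ∫ r in Ioc (0:ℝ) 1, Gmod N n a α r ≤ C * (n : ℝ) ^ (-(min α ((N:ℝ) - α))) := by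
  have hN3 : (3:ℝ) ≤ (N:ℝ) := by exact_mod_cast hN
  set m := min α ((N:ℝ) - α) with hm
  have hmα : m ≤ α := min_le_left _ _
  have hmN : m ≤ (N:ℝ) - α := min_le_right _ _
  -- main estimate, for each n, of the two pieces
  have main : ∀ n : ℕ, 1 ≤ n →
      ∫ r in Ioc (0:ℝ) 1, Gmod N n a α r ≤
        a / N * (n:ℝ) ^ (α - (N:ℝ)) +
        a * (n:ℝ) ^ (-α) * ((1 - (n:ℝ) ^ (2*α - (N:ℝ))) / ((N:ℝ) - 2*α)) := by
    intro n hn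
    have hn1 : (1:ℝ) ≤ (n:ℝ) := by exact_mod_cast hn
    have hn0 : (0:ℝ) < (n:ℝ) := by linarith
    set t : ℝ := ((n:ℝ))⁻¹ with htdef
    have ht0 : 0 < t := by positivity
    have ht1 : t ≤ 1 := by
      rw [htdef]
      exact inv_le_one_of_one_le₀ hn1
    have htN : t ^ N = (n:ℝ) ^ (-(N:ℝ)) := by
      rw [htdef, inv_pow, Real.rpow_neg (Nat.cast_nonneg n), Real.rpow_natCast]
    -- split the integral
    have hsplit : ∫ r in Ioc (0:ℝ) 1, Gmod N n a α r =
        (∫ r in Ioc (0:ℝ) t, Gmod N n a α r) + ∫ r in Ioc t 1, Gmod N n a α r := by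
      rw [← Ioc_union_Ioc_eq_Ioc ht0.le ht1,
        setIntegral_union (Ioc_disjoint_Ioc_of_le le_rfl) measurableSet_Ioc
          (Gmod_integrableOn N n a α (subset_refl (Ioc 0 t)))
          (Gmod_integrableOn N n a α (subset_refl (Ioc t 1)))]
    -- first piece
    have hS1 : ∫ r in Ioc (0:ℝ) t, Gmod N n a α r ≤ a / N * (n:ℝ) ^ (α - (N:ℝ)) := by
      have hle : ∀ r ∈ Ioc (0:ℝ) t, Gmod N n a α r ≤ a * (n:ℝ) ^ α * r ^ (N-1) := by
        intro r hr
        have hr0 : (0:ℝ) ≤ r := hr.1.le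
        have hX : (1 + (n:ℝ)^2*r^2) ^ (-α) ≤ 1 :=
          Real.rpow_le_one_of_one_le_of_nonpos (by nlinarith [sq_nonneg ((n:ℝ)*r)])
            (by linarith)
        have hnn : (0:ℝ) ≤ (n:ℝ) ^ α := Real.rpow_nonneg hn0.le _
        calc Gmod N n a α r = r ^ (N-1) * (a * ((n:ℝ)^α * (1+(n:ℝ)^2*r^2)^(-α))) := rfl
          _ ≤ r ^ (N-1) * (a * ((n:ℝ)^α * 1)) := by
              apply mul_le_mul_of_nonneg_left _ (by positivity)
              apply mul_le_mul_of_nonneg_left _ ha.le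
              exact mul_le_mul_of_nonneg_left hX hnn
          _ = a * (n:ℝ) ^ α * r ^ (N-1) := by ring
      calc ∫ r in Ioc (0:ℝ) t, Gmod N n a α r
          ≤ ∫ r in Ioc (0:ℝ) t, a * (n:ℝ) ^ α * r ^ (N-1) :=
            setIntegral_mono_on (Gmod_integrableOn N n a α (subset_refl _))
              (((continuous_const.mul (continuous_pow (N-1))).integrableOn_Ioc))
              measurableSet_Ioc hle
        _ = a * (n:ℝ) ^ α * ∫ r in Ioc (0:ℝ) t, r ^ (N-1) := by
            rw [MeasureTheory.integral_const_mul]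
        _ = a * (n:ℝ) ^ α * (t ^ N / N) := by rw [TB_int_pow_Ioc N (by omega) ht0.le]
        _ = a / N * ((n:ℝ) ^ α * (n:ℝ) ^ (-(N:ℝ))) := by rw [htN]; ring
        _ = a / N * (n:ℝ) ^ (α - (N:ℝ)) := by
            rw [← Real.rpow_add hn0, sub_eq_add_neg]
    -- second piece
    set s : ℝ := (N:ℝ) - 1 - 2*α with hsdef
    have hs_ne : s ≠ -1 := by
      intro h
      apply hne
      rw [hsdef] at h
      linarith
    have hS2 : ∫ r in Ioc t 1, Gmod N n a α r ≤
        a * (n:ℝ) ^ (-α) * ((1 - (n:ℝ) ^ (2*α - (N:ℝ))) / ((N:ℝ) - 2*α)) := by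
      have hle : ∀ r ∈ Ioc t (1:ℝ), Gmod N n a α r ≤ a * (n:ℝ) ^ (-α) * r ^ s := by
        intro r hr
        have hr0 : (0:ℝ) < r := lt_trans ht0 hr.1
        have h1 : ((n:ℝ)^2*r^2) ≤ 1 + (n:ℝ)^2*r^2 := by linarith
        have h2 : (1+(n:ℝ)^2*r^2) ^ (-α) ≤ ((n:ℝ)^2*r^2) ^ (-α) :=
          Real.rpow_le_rpow_of_nonpos (by positivity) h1 (by linarith)
        have h3 : ((n:ℝ)^2*r^2)^(-α) = (n:ℝ)^(-(2*α)) * r^(-(2*α)) := by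
          rw [Real.mul_rpow (by positivity) (by positivity), TB_sq_rpow hn0.le,
            TB_sq_rpow hr0.le]
        have hkey : (n:ℝ)^α * ((n:ℝ)^(-(2*α)) * r^(-(2*α))) = (n:ℝ)^(-α) * r^(-(2*α)) := by
          rw [← mul_assoc, ← Real.rpow_add hn0, show α + -(2*α) = -α by ring]
        have hr_pow : r ^ (N-1) * r ^ (-(2*α)) = r ^ s := by
          rw [← Real.rpow_natCast r (N-1), ← Real.rpow_add hr0]
          congr 1
          rw [Nat.cast_sub (by omega), Nat.cast_one, hsdef]
          ring
        calc Gmod N n a α r = r ^ (N-1) * (a * ((n:ℝ)^α * (1+(n:ℝ)^2*r^2)^(-α))) := rfl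
          _ ≤ r ^ (N-1) * (a * ((n:ℝ)^α * ((n:ℝ)^(-(2*α)) * r^(-(2*α))))) := by
              apply mul_le_mul_of_nonneg_left _ (by positivity)
              apply mul_le_mul_of_nonneg_left _ ha.le
              apply mul_le_mul_of_nonneg_left _ (Real.rpow_nonneg hn0.le _)
              rw [← h3]; exact h2
          _ = a * (n:ℝ)^(-α) * (r ^ (N-1) * r^(-(2*α))) := by rw [hkey]; ring
          _ = a * (n:ℝ)^(-α) * r ^ s := by rw [hr_pow]
      have hts : t ^ (s+1) = (n:ℝ) ^ (2*α - (N:ℝ)) := by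
        rw [htdef, Real.inv_rpow hn0.le, ← Real.rpow_neg hn0.le]
        congr 1
        rw [hsdef]; ring
      calc ∫ r in Ioc t 1, Gmod N n a α r
          ≤ ∫ r in Ioc t 1, a * (n:ℝ)^(-α) * r ^ s :=
            setIntegral_mono_on (Gmod_integrableOn N n a α (subset_refl _))
              ((TB_integrableOn_rpow_Ioc ht0 ht1).const_mul _)
              measurableSet_Ioc hle
        _ = a * (n:ℝ)^(-α) * ∫ r in Ioc t 1, r ^ s := by
            rw [MeasureTheory.integral_const_mul]
        _ = a * (n:ℝ)^(-α) * ((1 ^ (s+1) - t ^ (s+1)) / (s+1)) := by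
            rw [TB_int_rpow_Ioc ht0 ht1 hs_ne]
        _ = a * (n:ℝ)^(-α) * ((1 - (n:ℝ) ^ (2*α - (N:ℝ))) / ((N:ℝ) - 2*α)) := by
            rw [Real.one_rpow, hts, show s + 1 = (N:ℝ) - 2*α by rw [hsdef]; ring]
    rw [hsplit]
    exact add_le_add hS1 hS2
  -- now conclude, by cases on the sign of N - 2α
  rcases lt_or_gt_of_ne hne with hc | hc
  · -- 2α < N, m = α
    have hd : (0:ℝ) < (N:ℝ) - 2*α := by linarith
    have hNpos : (0:ℝ) < (N:ℝ) := by linarith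
    refine ⟨a / N + a / ((N:ℝ) - 2*α), by positivity, fun n hn => ?_⟩
    have hn1 : (1:ℝ) ≤ (n:ℝ) := by exact_mod_cast hn
    have hn0 : (0:ℝ) < (n:ℝ) := by linarith
    have hY : (n:ℝ) ^ (α - (N:ℝ)) ≤ (n:ℝ) ^ (-m) :=
      Real.rpow_le_rpow_of_exponent_le hn1 (by linarith)
    have hX : (n:ℝ) ^ (-α) ≤ (n:ℝ) ^ (-m) :=
      Real.rpow_le_rpow_of_exponent_le hn1 (by linarith)
    have hZ : (0:ℝ) ≤ (n:ℝ) ^ (2*α - (N:ℝ)) := Real.rpow_nonneg hn0.le _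
    have hXpos : (0:ℝ) ≤ (n:ℝ) ^ (-α) := Real.rpow_nonneg hn0.le _
    refine (main n hn).trans ?_
    have h1 : a / N * (n:ℝ) ^ (α - (N:ℝ)) ≤ a / N * (n:ℝ) ^ (-m) :=
      mul_le_mul_of_nonneg_left hY (by positivity)
    have h2 : a * (n:ℝ) ^ (-α) * ((1 - (n:ℝ) ^ (2*α - (N:ℝ))) / ((N:ℝ) - 2*α)) ≤
        a / ((N:ℝ) - 2*α) * (n:ℝ) ^ (-m) := by
      calc a * (n:ℝ) ^ (-α) * ((1 - (n:ℝ) ^ (2*α - (N:ℝ))) / ((N:ℝ) - 2*α))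
          = (a * (n:ℝ) ^ (-α) * (1 - (n:ℝ) ^ (2*α - (N:ℝ)))) / ((N:ℝ) - 2*α) := by ring
        _ ≤ (a * (n:ℝ) ^ (-m)) / ((N:ℝ) - 2*α) := by
            apply (div_le_div_iff_of_pos_right hd).mpr
            nlinarith [mul_le_mul_of_nonneg_left hX ha.le,
              mul_nonneg (mul_nonneg ha.le hXpos) hZ]
        _ = a / ((N:ℝ) - 2*α) * (n:ℝ) ^ (-m) := by ring
    linarith
  · -- 2α > N, m = N - α
    have hd : (0:ℝ) < 2*α - (N:ℝ) := by linarith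
    have hNpos : (0:ℝ) < (N:ℝ) := by linarith
    refine ⟨a / N + a / (2*α - (N:ℝ)), by positivity, fun n hn => ?_⟩
    have hn1 : (1:ℝ) ≤ (n:ℝ) := by exact_mod_cast hn
    have hn0 : (0:ℝ) < (n:ℝ) := by linarith
    have hY : (n:ℝ) ^ (α - (N:ℝ)) ≤ (n:ℝ) ^ (-m) :=
      Real.rpow_le_rpow_of_exponent_le hn1 (by linarith)
    have hXZ : (n:ℝ) ^ (-α) * (n:ℝ) ^ (2*α - (N:ℝ)) = (n:ℝ) ^ (α - (N:ℝ)) := by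
      rw [← Real.rpow_add hn0, show -α + (2*α - (N:ℝ)) = α - (N:ℝ) by ring]
    have hXpos : (0:ℝ) ≤ (n:ℝ) ^ (-α) := Real.rpow_nonneg hn0.le _
    have hZ1 : (1:ℝ) ≤ (n:ℝ) ^ (2*α - (N:ℝ)) :=
      Real.one_le_rpow hn1 (by linarith)
    refine (main n hn).trans ?_
    have h1 : a / N * (n:ℝ) ^ (α - (N:ℝ)) ≤ a / N * (n:ℝ) ^ (-m) :=
      mul_le_mul_of_nonneg_left hY (by positivity)
    have h2 : a * (n:ℝ) ^ (-α) * ((1 - (n:ℝ) ^ (2*α - (N:ℝ))) / ((N:ℝ) - 2*α)) ≤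
        a / (2*α - (N:ℝ)) * (n:ℝ) ^ (-m) := by
      calc a * (n:ℝ) ^ (-α) * ((1 - (n:ℝ) ^ (2*α - (N:ℝ))) / ((N:ℝ) - 2*α))
          = (a * ((n:ℝ) ^ (-α) * (n:ℝ) ^ (2*α - (N:ℝ))) - a * (n:ℝ) ^ (-α)) / (2*α - (N:ℝ)) := by
            have hd1 : (N:ℝ) - 2*α ≠ 0 := by linarith
            have hd2 : 2*α - (N:ℝ) ≠ 0 := by linarith
            rw [show (N:ℝ) - 2*α = -(2*α - (N:ℝ)) by ring, div_neg]
            ring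
        _ ≤ (a * (n:ℝ) ^ (-m)) / (2*α - (N:ℝ)) := by
            apply (div_le_div_iff_of_pos_right hd).mpr
            rw [hXZ]
            nlinarith [hXpos, hY]
        _ = a / (2*α - (N:ℝ)) * (n:ℝ) ^ (-m) := by ring
    linarith

/-- Lower bound for the integral of the model integrand over `(0,1]`. -/
lemma Gmod_lower (N : ℕ) (hN : 3 ≤ N) {a α : ℝ} (ha : 0 < a) (hα : 0 < α)
    (hαN : α < N) (hne : 2 * α ≠ (N : ℝ)) :
    ∃ c : ℝ, 0 < c ∧ ∀ n : ℕ, 1 ≤ n →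
      c * (n : ℝ) ^ (-(min α ((N:ℝ) - α))) ≤ ∫ r in Ioc (0:ℝ) 1, Gmod N n a α r := by
  have hN3 : (3:ℝ) ≤ (N:ℝ) := by exact_mod_cast hN
  have hNpos : (0:ℝ) < (N:ℝ) := by linarith
  have h2α : (0:ℝ) < (2:ℝ) ^ (-α) := Real.rpow_pos_of_pos two_pos _
  rcases lt_or_gt_of_ne hne with hc | hc
  · -- 2α < N : m = α, integrate over [1/2, 1]
    have hmeq : min α ((N:ℝ) - α) = α := min_eq_left (by linarith)
    have hhalf : ((2:ℝ)⁻¹) ^ N < 1 := pow_lt_one₀ (by norm_num) (by norm_num) (by omega)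
    have hhalf' : (0:ℝ) < 1 - ((2:ℝ)⁻¹) ^ N := by linarith
    refine ⟨a * (2:ℝ) ^ (-α) * ((1 - ((2:ℝ)⁻¹) ^ N) / N), by positivity, fun n hn => ?_⟩
    have hn1 : (1:ℝ) ≤ (n:ℝ) := by exact_mod_cast hn
    have hn0 : (0:ℝ) < (n:ℝ) := by linarith
    have hml : ∀ r ∈ Ioc ((2:ℝ)⁻¹) 1,
        a * (2:ℝ) ^ (-α) * (n:ℝ) ^ (-α) * r ^ (N-1) ≤ Gmod N n a α r := by
      intro r hr
      have hr0 : (0:ℝ) < r := lt_of_lt_of_le (by norm_num : (0:ℝ) < 2⁻¹) hr.1.le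
      have hn2 : (1:ℝ) ≤ (n:ℝ)^2 := by nlinarith
      have hr2 : r^2 ≤ 1 := by nlinarith [hr.2, hr0]
      have hb : 1 + (n:ℝ)^2*r^2 ≤ 2*(n:ℝ)^2 := by
        nlinarith [mul_le_mul_of_nonneg_left hr2 (sq_nonneg (n:ℝ))]
      have h2 : (2*(n:ℝ)^2) ^ (-α) ≤ (1+(n:ℝ)^2*r^2) ^ (-α) :=
        Real.rpow_le_rpow_of_nonpos (by positivity) hb (by linarith)
      have h3 : (2*(n:ℝ)^2) ^ (-α) = (2:ℝ)^(-α) * (n:ℝ)^(-(2*α)) := by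
        rw [Real.mul_rpow (by norm_num) (by positivity), TB_sq_rpow hn0.le]
      have hkey : (n:ℝ)^α * ((2:ℝ)^(-α) * (n:ℝ)^(-(2*α))) = (2:ℝ)^(-α) * (n:ℝ)^(-α) := by
        rw [mul_comm ((2:ℝ)^(-α)) ((n:ℝ)^(-(2*α))), ← mul_assoc, ← Real.rpow_add hn0,
          show α + -(2*α) = -α by ring, mul_comm]
      calc a * (2:ℝ) ^ (-α) * (n:ℝ) ^ (-α) * r ^ (N-1)
          = r ^ (N-1) * (a * ((n:ℝ)^α * ((2:ℝ)^(-α) * (n:ℝ)^(-(2*α))))) := by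
            rw [hkey]; ring
        _ ≤ r ^ (N-1) * (a * ((n:ℝ)^α * (1+(n:ℝ)^2*r^2)^(-α))) := by
            apply mul_le_mul_of_nonneg_left _ (by positivity)
            apply mul_le_mul_of_nonneg_left _ ha.le
            apply mul_le_mul_of_nonneg_left _ (Real.rpow_nonneg hn0.le _)
            rw [← h3]; exact h2
        _ = Gmod N n a α r := rfl
    calc a * (2:ℝ) ^ (-α) * ((1 - ((2:ℝ)⁻¹) ^ N) / N) * (n:ℝ) ^ (-(min α ((N:ℝ) - α)))
        = a * (2:ℝ) ^ (-α) * (n:ℝ) ^ (-α) * ((1^N - ((2:ℝ)⁻¹) ^ N) / N) := by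
          rw [hmeq, one_pow]; ring
      _ = ∫ r in Ioc ((2:ℝ)⁻¹) 1, a * (2:ℝ) ^ (-α) * (n:ℝ) ^ (-α) * r ^ (N-1) := by
          rw [MeasureTheory.integral_const_mul, TB_int_pow_Ioc' N (by omega) (by norm_num)]
      _ ≤ ∫ r in Ioc ((2:ℝ)⁻¹) 1, Gmod N n a α r :=
          setIntegral_mono_on ((continuous_const.mul (continuous_pow (N-1))).integrableOn_Ioc)
            (Gmod_integrableOn N n a α (subset_refl _)) measurableSet_Ioc hml
      _ ≤ ∫ r in Ioc (0:ℝ) 1, Gmod N n a α r := by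
          apply setIntegral_mono_set (Gmod_integrableOn N n a α (subset_refl _))
          · filter_upwards [ae_restrict_mem measurableSet_Ioc] with r hr
            exact Gmod_nonneg N n ha.le α hr.1.le
          · exact HasSubset.Subset.eventuallyLE (Ioc_subset_Ioc_left (by norm_num))
  · -- 2α > N : m = N - α, integrate over (0, 1/n]
    have hmeq : min α ((N:ℝ) - α) = (N:ℝ) - α := min_eq_right (by linarith)
    refine ⟨a * (2:ℝ) ^ (-α) / N, by positivity, fun n hn => ?_⟩
    have hn1 : (1:ℝ) ≤ (n:ℝ) := by exact_mod_cast hn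
    have hn0 : (0:ℝ) < (n:ℝ) := by linarith
    set t : ℝ := ((n:ℝ))⁻¹ with htdef
    have ht0 : 0 < t := by positivity
    have ht1 : t ≤ 1 := by rw [htdef]; exact inv_le_one_of_one_le₀ hn1
    have htN : t ^ N = (n:ℝ) ^ (-(N:ℝ)) := by
      rw [htdef, inv_pow, Real.rpow_neg (Nat.cast_nonneg n), Real.rpow_natCast]
    have hml : ∀ r ∈ Ioc (0:ℝ) t,
        a * (2:ℝ) ^ (-α) * (n:ℝ) ^ α * r ^ (N-1) ≤ Gmod N n a α r := by
      intro r hr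
      have hr0 : (0:ℝ) < r := hr.1
      have hnr : (n:ℝ) * r ≤ 1 := by
        have := mul_le_mul_of_nonneg_left hr.2 hn0.le
        rwa [htdef, mul_inv_cancel₀ hn0.ne'] at this
      have hb : 1 + (n:ℝ)^2*r^2 ≤ 2 := by nlinarith [mul_pos hn0 hr0]
      have h2 : (2:ℝ) ^ (-α) ≤ (1+(n:ℝ)^2*r^2) ^ (-α) :=
        Real.rpow_le_rpow_of_nonpos (by positivity) hb (by linarith)
      calc a * (2:ℝ) ^ (-α) * (n:ℝ) ^ α * r ^ (N-1)
          = r ^ (N-1) * (a * ((n:ℝ)^α * (2:ℝ)^(-α))) := by ring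
        _ ≤ r ^ (N-1) * (a * ((n:ℝ)^α * (1+(n:ℝ)^2*r^2)^(-α))) := by
            apply mul_le_mul_of_nonneg_left _ (by positivity)
            apply mul_le_mul_of_nonneg_left _ ha.le
            exact mul_le_mul_of_nonneg_left h2 (Real.rpow_nonneg hn0.le _)
        _ = Gmod N n a α r := rfl
    calc a * (2:ℝ) ^ (-α) / N * (n:ℝ) ^ (-(min α ((N:ℝ) - α)))
        = a * (2:ℝ) ^ (-α) * (n:ℝ) ^ α * ((n:ℝ) ^ (-(N:ℝ)) / N) := by
          have hpow : (n:ℝ) ^ α * (n:ℝ) ^ (-(N:ℝ)) = (n:ℝ) ^ (-((N:ℝ)-α)) := by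
            rw [← Real.rpow_add hn0, show α + -(N:ℝ) = -((N:ℝ) - α) by ring]
          rw [hmeq, ← hpow]
          ring
      _ = ∫ r in Ioc (0:ℝ) t, a * (2:ℝ) ^ (-α) * (n:ℝ) ^ α * r ^ (N-1) := by
          rw [MeasureTheory.integral_const_mul, TB_int_pow_Ioc N (by omega) ht0.le, htN]
      _ ≤ ∫ r in Ioc (0:ℝ) t, Gmod N n a α r :=
          setIntegral_mono_on ((continuous_const.mul (continuous_pow (N-1))).integrableOn_Ioc)
            (Gmod_integrableOn N n a α (subset_refl _)) measurableSet_Ioc hml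
      _ ≤ ∫ r in Ioc (0:ℝ) 1, Gmod N n a α r := by
          apply setIntegral_mono_set (Gmod_integrableOn N n a α (subset_refl _))
          · filter_upwards [ae_restrict_mem measurableSet_Ioc] with r hr
            exact Gmod_nonneg N n ha.le α hr.1.le
          · exact HasSubset.Subset.eventuallyLE (Ioc_subset_Ioc_right ht1)
noncomputable def bubbleProf (N n : ℕ) (r : ℝ) : ℝ :=
  if r < 1 then
    ((N : ℝ) * ((N : ℝ) - 2)) ^ (((N : ℝ) - 2) / 4) *
      ((n : ℝ) / (1 + (n : ℝ) ^ 2 * r ^ 2)) ^ (((N : ℝ) - 2) / 2)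
  else if r < 2 then
    ((N : ℝ) * ((N : ℝ) - 2)) ^ (((N : ℝ) - 2) / 4) *
      ((n : ℝ) / (1 + (n : ℝ) ^ 2)) ^ (((N : ℝ) - 2) / 2) * (2 - r)
  else 0

lemma bubbleProf_nonneg (N n : ℕ) (hN : 3 ≤ N) (r : ℝ) : 0 ≤ bubbleProf N n r := by
  have hN3 : (3:ℝ) ≤ (N:ℝ) := by exact_mod_cast hN
  have hA : (0:ℝ) ≤ ((N : ℝ) * ((N : ℝ) - 2)) ^ (((N : ℝ) - 2) / 4) :=
    Real.rpow_nonneg (by nlinarith) _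
  unfold bubbleProf
  split_ifs with h1 h2
  · exact mul_nonneg hA (Real.rpow_nonneg (by positivity) _)
  · have : (0:ℝ) ≤ 2 - r := by linarith
    exact mul_nonneg (mul_nonneg hA (Real.rpow_nonneg (by positivity) _)) this
  · exact le_rfl

lemma bubbleProf_le (N n : ℕ) (hN : 3 ≤ N) (hn : 1 ≤ n) (r : ℝ) :
    bubbleProf N n r ≤ ((N : ℝ) * ((N : ℝ) - 2)) ^ (((N : ℝ) - 2) / 4) *
      (n : ℝ) ^ (((N : ℝ) - 2) / 2) := by
  have hN3 : (3:ℝ) ≤ (N:ℝ) := by exact_mod_cast hN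
  have hn1 : (1:ℝ) ≤ (n:ℝ) := by exact_mod_cast hn
  have hA : (0:ℝ) ≤ ((N : ℝ) * ((N : ℝ) - 2)) ^ (((N : ℝ) - 2) / 4) :=
    Real.rpow_nonneg (by nlinarith) _
  have hβ : (0:ℝ) ≤ ((N : ℝ) - 2) / 2 := by linarith
  have hkey : ∀ d : ℝ, 1 ≤ d →
      ((n : ℝ) / d) ^ (((N : ℝ) - 2) / 2) ≤ (n : ℝ) ^ (((N : ℝ) - 2) / 2) := by
    intro d hd
    apply Real.rpow_le_rpow (by positivity) _ hβ
    calc (n:ℝ)/d ≤ (n:ℝ)/1 := by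
          apply div_le_div_of_nonneg_left (by linarith) one_pos hd
      _ = n := div_one _
  unfold bubbleProf
  split_ifs with h1 h2
  · exact mul_le_mul_of_nonneg_left (hkey _ (by nlinarith [sq_nonneg ((n:ℝ) * r)])) hA
  · have h2r : 2 - r ≤ 1 := by linarith [not_lt.mp h1]
    have h2r' : 0 ≤ 2 - r := by linarith
    calc ((N : ℝ) * ((N : ℝ) - 2)) ^ (((N : ℝ) - 2) / 4) *
          ((n : ℝ) / (1 + (n : ℝ) ^ 2)) ^ (((N : ℝ) - 2) / 2) * (2 - r)
        ≤ ((N : ℝ) * ((N : ℝ) - 2)) ^ (((N : ℝ) - 2) / 4) *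
          ((n : ℝ) / (1 + (n : ℝ) ^ 2)) ^ (((N : ℝ) - 2) / 2) * 1 := by
          apply mul_le_mul_of_nonneg_left h2r (by positivity)
      _ ≤ _ := by
          rw [mul_one]
          exact mul_le_mul_of_nonneg_left (hkey _ (by nlinarith)) hA
  · positivity

lemma bubbleProf_measurable (N n : ℕ) (hN : 3 ≤ N) : Measurable (bubbleProf N n) := by
  have hN3 : (3:ℝ) ≤ (N:ℝ) := by exact_mod_cast hN
  unfold bubbleProf
  apply Measurable.ite (measurableSet_lt measurable_id measurable_const)
  · have hc : Continuous fun r : ℝ => ((n : ℝ) / (1 + (n : ℝ) ^ 2 * r ^ 2)) ^ (((N : ℝ) - 2) / 2) := by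
      apply Continuous.rpow_const
      · exact continuous_const.div (by continuity) (fun x => by positivity)
      · intro x
        right
        linarith
    exact (hc.measurable).const_mul _
  · apply Measurable.ite (measurableSet_lt measurable_id measurable_const)
    · exact (measurable_const.sub measurable_id).const_mul _
    · exact measurable_const

lemma integrableOn_bubblePow (N n : ℕ) (hN : 3 ≤ N) (hn : 1 ≤ n) (η : ℝ) (hη : 1 ≤ η)
    {s : Set ℝ} (hs : s ⊆ Ioc 0 2) :
    IntegrableOn (fun r : ℝ => r ^ (N - 1) * bubbleProf N n r ^ η) s := by
  have hsub : IntegrableOn (fun r : ℝ => r ^ (N - 1) * bubbleProf N n r ^ η) (Ioc 0 2) := by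
    set M : ℝ := ((N : ℝ) * ((N : ℝ) - 2)) ^ (((N : ℝ) - 2) / 4) * (n : ℝ) ^ (((N : ℝ) - 2) / 2)
      with hM
    apply Measure.integrableOn_of_bounded (M := 2 ^ (N - 1) * M ^ η)
    · exact ((measure_Ioc_lt_top).ne)
    · exact ((measurable_id.pow_const (N-1)).mul
        ((bubbleProf_measurable N n hN).pow_const η)).aestronglyMeasurable
    · filter_upwards [ae_restrict_mem measurableSet_Ioc] with r hr
      have hr0 : 0 < r := hr.1
      have hr2 : r ≤ 2 := hr.2
      have h1 : 0 ≤ bubbleProf N n r := bubbleProf_nonneg N n hN r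
      have h2 : bubbleProf N n r ^ η ≤ M ^ η :=
        Real.rpow_le_rpow h1 (bubbleProf_le N n hN hn r) (by linarith)
      have h3 : r ^ (N - 1) ≤ 2 ^ (N - 1) := pow_le_pow_left₀ hr0.le hr2 _
      have h4 : (0:ℝ) ≤ bubbleProf N n r ^ η := Real.rpow_nonneg h1 _
      rw [Real.norm_eq_abs, abs_of_nonneg (by positivity)]
      exact mul_le_mul h3 h2 h4 (by positivity)
  exact hsub.mono_set hs

/-- On the open unit interval the profile power agrees with the model integrand. -/
lemma bubbleProf_pow_eq (N n : ℕ) (hN : 3 ≤ N) (η : ℝ) {r : ℝ} (hr : r ∈ Ioo (0:ℝ) 1) :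
    bubbleProf N n r ^ η =
      (((N:ℝ) * ((N:ℝ) - 2)) ^ (((N:ℝ) - 2) / 4)) ^ η *
        ((n:ℝ) ^ (((N:ℝ) - 2) * η / 2) *
          (1 + (n:ℝ) ^ 2 * r ^ 2) ^ (-(((N:ℝ) - 2) * η / 2))) := by
  have hN3 : (3:ℝ) ≤ (N:ℝ) := by exact_mod_cast hN
  have hd : (0:ℝ) < 1 + (n:ℝ)^2*r^2 := by positivity
  have hA0 : (0:ℝ) ≤ ((N:ℝ) * ((N:ℝ) - 2)) ^ (((N:ℝ) - 2) / 4) :=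
    Real.rpow_nonneg (by nlinarith) _
  have hq0 : (0:ℝ) ≤ (n:ℝ) / (1 + (n:ℝ)^2*r^2) := by positivity
  rw [bubbleProf, if_pos hr.2, Real.mul_rpow hA0 (Real.rpow_nonneg hq0 _),
    ← Real.rpow_mul hq0, show ((N:ℝ)-2)/2*η = ((N:ℝ)-2)*η/2 by ring,
    Real.div_rpow (Nat.cast_nonneg n) hd.le, Real.rpow_neg hd.le, div_eq_mul_inv]
  ring

/-- Splitting of the radial integral. -/
lemma bubble_radial_split (N n : ℕ) (hN : 3 ≤ N) (hn : 1 ≤ n) (η : ℝ) (hη : 1 ≤ η) :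
    ∫ r in Ioi (0:ℝ), r ^ (N - 1) * bubbleProf N n r ^ η =
      (∫ r in Ioc (0:ℝ) 1, r ^ (N - 1) * bubbleProf N n r ^ η) +
        ∫ r in Ioc (1:ℝ) 2, r ^ (N - 1) * bubbleProf N n r ^ η := by
  have hzero : ∀ r ∈ Ioi (2:ℝ), r ^ (N - 1) * bubbleProf N n r ^ η = 0 := by
    intro r hr
    have h1 : ¬ (r < 1) := by simp only [mem_Ioi] at hr; linarith
    have h2 : ¬ (r < 2) := by simp only [mem_Ioi] at hr; linarith
    rw [bubbleProf, if_neg h1, if_neg h2, Real.zero_rpow (by linarith), mul_zero]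
  have hIoi2 : IntegrableOn (fun r : ℝ => r ^ (N - 1) * bubbleProf N n r ^ η) (Ioi 2) := by
    rw [integrableOn_congr_fun hzero measurableSet_Ioi]
    exact integrableOn_zero
  have hIoc : IntegrableOn (fun r : ℝ => r ^ (N - 1) * bubbleProf N n r ^ η) (Ioc 0 2) :=
    integrableOn_bubblePow N n hN hn η hη (subset_refl _)
  rw [show Ioi (0:ℝ) = Ioc 0 2 ∪ Ioi 2 from (Ioc_union_Ioi_eq_Ioi (by norm_num)).symm,
    setIntegral_union (Ioc_disjoint_Ioi le_rfl) measurableSet_Ioi hIoc hIoi2,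
    setIntegral_congr_fun measurableSet_Ioi hzero, integral_zero, add_zero,
    show Ioc (0:ℝ) 2 = Ioc 0 1 ∪ Ioc 1 2 from (Ioc_union_Ioc_eq_Ioc (by norm_num)
      (by norm_num)).symm,
    setIntegral_union (Ioc_disjoint_Ioc_of_le le_rfl) measurableSet_Ioc
      (integrableOn_bubblePow N n hN hn η hη (Ioc_subset_Ioc_right (by norm_num)))
      (integrableOn_bubblePow N n hN hn η hη (Ioc_subset_Ioc_left (by norm_num)))]

/-- Upper bound for the annulus part. -/
lemma bubble_I2_upper (N n : ℕ) (hN : 3 ≤ N) (hn : 1 ≤ n) (η : ℝ) (hη : 1 ≤ η) :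
    ∫ r in Ioc (1:ℝ) 2, r ^ (N - 1) * bubbleProf N n r ^ η ≤
      2 ^ (N - 1) * ((((N:ℝ) * ((N:ℝ) - 2)) ^ (((N:ℝ) - 2) / 4)) ^ η *
        (n:ℝ) ^ (-(((N:ℝ) - 2) * η / 2))) := by
  have hN3 : (3:ℝ) ≤ (N:ℝ) := by exact_mod_cast hN
  have hn1 : (1:ℝ) ≤ (n:ℝ) := by exact_mod_cast hn
  have hn0 : (0:ℝ) < (n:ℝ) := by linarith
  set A : ℝ := ((N:ℝ) * ((N:ℝ) - 2)) ^ (((N:ℝ) - 2) / 4) with hA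
  have hA0 : (0:ℝ) ≤ A := Real.rpow_nonneg (by nlinarith) _
  have hβ : (0:ℝ) ≤ ((N:ℝ) - 2) / 2 := by linarith
  have hprof : ∀ r ∈ Ioc (1:ℝ) 2, bubbleProf N n r ≤ A * ((n:ℝ)⁻¹) ^ (((N:ℝ) - 2) / 2) := by
    intro r hr
    have h1 : ¬ (r < 1) := not_lt.mpr hr.1.le
    by_cases h2 : r < 2
    · rw [bubbleProf, if_neg h1, if_pos h2]
      have hq : (n:ℝ) / (1 + (n:ℝ)^2) ≤ (n:ℝ)⁻¹ := by
        rw [div_le_iff₀ (by positivity)]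
        rw [inv_mul_eq_div, le_div_iff₀ hn0]
        nlinarith
      have hq0 : (0:ℝ) ≤ (n:ℝ) / (1 + (n:ℝ)^2) := by positivity
      have hqp : ((n:ℝ) / (1 + (n:ℝ)^2)) ^ (((N:ℝ) - 2) / 2) ≤ ((n:ℝ)⁻¹) ^ (((N:ℝ) - 2) / 2) :=
        Real.rpow_le_rpow hq0 hq hβ
      have h2r : 2 - r ≤ 1 := by linarith
      have h2r' : 0 ≤ 2 - r := by linarith
      calc A * ((n:ℝ) / (1 + (n:ℝ)^2)) ^ (((N:ℝ) - 2) / 2) * (2 - r)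
          ≤ A * ((n:ℝ) / (1 + (n:ℝ)^2)) ^ (((N:ℝ) - 2) / 2) * 1 := by
            apply mul_le_mul_of_nonneg_left h2r
            exact mul_nonneg hA0 (Real.rpow_nonneg hq0 _)
        _ = A * ((n:ℝ) / (1 + (n:ℝ)^2)) ^ (((N:ℝ) - 2) / 2) := mul_one _
        _ ≤ A * ((n:ℝ)⁻¹) ^ (((N:ℝ) - 2) / 2) := mul_le_mul_of_nonneg_left hqp hA0
    · rw [bubbleProf, if_neg h1, if_neg h2]
      positivity
  have hpt : ∀ r ∈ Ioc (1:ℝ) 2, r ^ (N - 1) * bubbleProf N n r ^ η ≤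
      2 ^ (N - 1) * (A ^ η * (n:ℝ) ^ (-(((N:ℝ) - 2) * η / 2))) := by
    intro r hr
    have hr0 : (0:ℝ) < r := lt_trans one_pos hr.1
    have hbp : (0:ℝ) ≤ bubbleProf N n r := bubbleProf_nonneg N n hN r
    have hpow : bubbleProf N n r ^ η ≤ A ^ η * (n:ℝ) ^ (-(((N:ℝ) - 2) * η / 2)) := by
      have h1 : bubbleProf N n r ^ η ≤ (A * ((n:ℝ)⁻¹) ^ (((N:ℝ) - 2) / 2)) ^ η :=
        Real.rpow_le_rpow hbp (hprof r hr) (by linarith)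
      refine h1.trans_eq ?_
      rw [Real.mul_rpow hA0 (Real.rpow_nonneg (by positivity) _),
        ← Real.rpow_mul (by positivity : (0:ℝ) ≤ (n:ℝ)⁻¹),
        Real.inv_rpow hn0.le, ← Real.rpow_neg hn0.le,
        show -(((N:ℝ) - 2) / 2 * η) = -(((N:ℝ) - 2) * η / 2) by ring]
    have hrN : r ^ (N - 1) ≤ 2 ^ (N - 1) := pow_le_pow_left₀ hr0.le hr.2 _
    have h4 : (0:ℝ) ≤ bubbleProf N n r ^ η := Real.rpow_nonneg hbp _
    exact mul_le_mul hrN hpow h4 (by positivity)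
  calc ∫ r in Ioc (1:ℝ) 2, r ^ (N - 1) * bubbleProf N n r ^ η
      ≤ ∫ _r in Ioc (1:ℝ) 2, 2 ^ (N - 1) * (A ^ η * (n:ℝ) ^ (-(((N:ℝ) - 2) * η / 2))) :=
        setIntegral_mono_on
          (integrableOn_bubblePow N n hN hn η hη (Ioc_subset_Ioc_left (by norm_num)))
          (integrableOn_const measure_Ioc_lt_top.ne) measurableSet_Ioc hpt
    _ = 2 ^ (N - 1) * (A ^ η * (n:ℝ) ^ (-(((N:ℝ) - 2) * η / 2))) := by
        rw [setIntegral_const, Real.volume_real_Ioc]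
        norm_num

/-- For `1 ≤ η < 2N/(N-2)` with `η ≠ N/(N-2)`, the `L^η` norm of the truncated bubble
satisfies `∫ U_n^η ≍ n^(-m)` with `m = min{(N-2)η/2, N - (N-2)η/2}`. -/
theorem truncatedBubble_Lp_estimate
    (N : ℕ) (hN : 3 ≤ N) (η : ℝ) (hη₁ : 1 ≤ η) (hη₂ : η < 2 * (N : ℝ) / ((N : ℝ) - 2))
    (hηne : η ≠ (N : ℝ) / ((N : ℝ) - 2)) :
    ∃ c C : ℝ, 0 < c ∧ 0 < C ∧
      ∀ n : ℕ, 1 ≤ n →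
        c * (n : ℝ) ^ (-(min (((N : ℝ) - 2) * η / 2) ((N : ℝ) - ((N : ℝ) - 2) * η / 2))) ≤
            (∫ x : EuclideanSpace ℝ (Fin N), truncatedBubble N n x ^ η) ∧
        (∫ x : EuclideanSpace ℝ (Fin N), truncatedBubble N n x ^ η) ≤
          C * (n : ℝ) ^ (-(min (((N : ℝ) - 2) * η / 2) ((N : ℝ) - ((N : ℝ) - 2) * η / 2))) := by
  have hN3 : (3:ℝ) ≤ (N:ℝ) := by exact_mod_cast hN
  set α : ℝ := ((N:ℝ) - 2) * η / 2 with hαdef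
  have hα0 : 0 < α := by rw [hαdef]; nlinarith
  have hαN : α < (N:ℝ) := by
    have h2 : (0:ℝ) < (N:ℝ) - 2 := by linarith
    have h3 : η * ((N:ℝ) - 2) < 2 * (N:ℝ) := (lt_div_iff₀ h2).mp hη₂
    have h4 : 2 * α = ((N:ℝ) - 2) * η := by rw [hαdef]; ring
    nlinarith
  have hne : 2 * α ≠ (N:ℝ) := by
    intro h
    apply hηne
    have h4 : 2 * α = ((N:ℝ) - 2) * η := by rw [hαdef]; ring
    have h5 : ((N:ℝ) - 2) * η = (N:ℝ) := by linarith
    rw [eq_div_iff (by linarith : (N:ℝ) - 2 ≠ 0)]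
    linear_combination h5
  set A : ℝ := ((N:ℝ) * ((N:ℝ) - 2)) ^ (((N:ℝ) - 2) / 4) with hAdef
  have hApos : 0 < A := Real.rpow_pos_of_pos (by nlinarith) _
  set a : ℝ := A ^ η with hadef
  have ha : 0 < a := Real.rpow_pos_of_pos hApos _
  obtain ⟨C₁, hC₁, hub⟩ := Gmod_upper N hN ha hα0 hαN hne
  obtain ⟨c₁, hc₁, hlb⟩ := Gmod_lower N hN ha hα0 hαN hne
  -- the dimensional constant
  set κ : ℝ := (N:ℝ) * (volume (Metric.ball (0 : EuclideanSpace ℝ (Fin N)) 1)).toReal with hκdef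
  have hballpos : 0 < (volume (Metric.ball (0 : EuclideanSpace ℝ (Fin N)) 1)).toReal := by
    apply ENNReal.toReal_pos
    · exact (Metric.measure_ball_pos volume 0 one_pos).ne'
    · exact (measure_ball_lt_top).ne
  have hκ : 0 < κ := by
    rw [hκdef]
    apply mul_pos (by exact_mod_cast (by omega : 0 < N)) hballpos
  have hnontriv : Nontrivial (EuclideanSpace ℝ (Fin N)) := by
    have hpos : 0 < N := by omega
    haveI : Nonempty (Fin N) := ⟨⟨0, hpos⟩⟩
    have h01 : (EuclideanSpace.single (⟨0,hpos⟩ : Fin N) (1:ℝ)) ≠ 0 := by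
      intro h
      have := congrArg (fun v => v ⟨0,hpos⟩) h
      simp [EuclideanSpace.single_apply] at this
    exact ⟨_, _, h01⟩
  refine ⟨κ * c₁, κ * (C₁ + 2 ^ (N-1) * a), mul_pos hκ hc₁, by positivity, fun n hn => ?_⟩
  have hn1 : (1:ℝ) ≤ (n:ℝ) := by exact_mod_cast hn
  have hn0 : (0:ℝ) < (n:ℝ) := by linarith
  -- reduce to the radial integral
  have hrad : (∫ x : EuclideanSpace ℝ (Fin N), truncatedBubble N n x ^ η) =
      κ * ∫ r in Ioi (0:ℝ), r ^ (N - 1) * bubbleProf N n r ^ η := by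
    have h := MeasureTheory.integral_fun_norm_addHaar
      (volume : Measure (EuclideanSpace ℝ (Fin N))) (fun r => bubbleProf N n r ^ η)
    simp only [finrank_euclideanSpace, Fintype.card_fin, nsmul_eq_mul, smul_eq_mul] at h
    calc (∫ x : EuclideanSpace ℝ (Fin N), truncatedBubble N n x ^ η)
        = ∫ x : EuclideanSpace ℝ (Fin N), bubbleProf N n ‖x‖ ^ η := rfl
      _ = (N:ℝ) * ((volume (Metric.ball (0 : EuclideanSpace ℝ (Fin N)) 1)).toReal *
            ∫ r in Ioi (0:ℝ), r ^ (N - 1) * bubbleProf N n r ^ η) := h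
      _ = κ * ∫ r in Ioi (0:ℝ), r ^ (N - 1) * bubbleProf N n r ^ η := by
          rw [hκdef]; ring
  -- split and identify the pieces
  set I₁ : ℝ := ∫ r in Ioc (0:ℝ) 1, r ^ (N - 1) * bubbleProf N n r ^ η with hI₁def
  set I₂ : ℝ := ∫ r in Ioc (1:ℝ) 2, r ^ (N - 1) * bubbleProf N n r ^ η with hI₂def
  have hsplit : (∫ x : EuclideanSpace ℝ (Fin N), truncatedBubble N n x ^ η) =
      κ * (I₁ + I₂) := by
    rw [hrad, bubble_radial_split N n hN hn η hη₁]
  have hI1G : I₁ = ∫ r in Ioc (0:ℝ) 1, Gmod N n a α r := by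
    rw [hI₁def, integral_Ioc_eq_integral_Ioo, integral_Ioc_eq_integral_Ioo]
    apply setIntegral_congr_fun measurableSet_Ioo
    intro r hr
    show r ^ (N - 1) * bubbleProf N n r ^ η = Gmod N n a α r
    rw [bubbleProf_pow_eq N n hN η hr]
    rfl
  have hI2nn : 0 ≤ I₂ := by
    rw [hI₂def]
    apply setIntegral_nonneg measurableSet_Ioc
    intro r hr
    exact mul_nonneg (pow_nonneg (le_trans zero_le_one hr.1.le) _)
      (Real.rpow_nonneg (bubbleProf_nonneg N n hN r) _)
  have hXm : (n:ℝ) ^ (-α) ≤ (n:ℝ) ^ (-(min α ((N:ℝ) - α))) :=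
    Real.rpow_le_rpow_of_exponent_le hn1 (neg_le_neg (min_le_left _ _))
  have hI2ub : I₂ ≤ 2 ^ (N-1) * (a * (n:ℝ) ^ (-(min α ((N:ℝ) - α)))) := by
    refine (bubble_I2_upper N n hN hn η hη₁).trans ?_
    apply mul_le_mul_of_nonneg_left _ (by positivity : (0:ℝ) ≤ 2 ^ (N-1))
    exact mul_le_mul_of_nonneg_left hXm ha.le
  constructor
  · calc κ * c₁ * (n:ℝ) ^ (-(min α ((N:ℝ) - α)))
        = κ * (c₁ * (n:ℝ) ^ (-(min α ((N:ℝ) - α)))) := by ring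
      _ ≤ κ * (I₁ + I₂) := by
          apply mul_le_mul_of_nonneg_left _ hκ.le
          have h1 := hlb n hn
          rw [← hI1G] at h1
          linarith
      _ = _ := hsplit.symm
  · calc (∫ x : EuclideanSpace ℝ (Fin N), truncatedBubble N n x ^ η) = κ * (I₁ + I₂) := hsplit
      _ ≤ κ * ((C₁ + 2 ^ (N-1) * a) * (n:ℝ) ^ (-(min α ((N:ℝ) - α)))) := by
          apply mul_le_mul_of_nonneg_left _ hκ.le
          have h1 := hub n hn
          rw [← hI1G] at h1
          nlinarith [hI2ub]
      _ = κ * (C₁ + 2 ^ (N-1) * a) * (n:ℝ) ^ (-(min α ((N:ℝ) - α))) := by ring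
end

section
/- Let N ≥ 3 be an integer, set A_N := (N(N−2))^((N−2)/4), and for each integer n ≥ 1 define U_n : ℝ^N → ℝ by U_n(x) = A_N·(n/(1+n²|x|²))^((N−2)/2) if |x| < 1, U_n(x) = A_N·(n/(1+n²))^((N−2)/2)·(2−|x|) if 1 ≤ |x| < 2, and U_n(x) = 0 if |x| ≥ 2. Then there exists a constant C > 0 such that for all integers n ≥ 1: |∫_{ℝ^N} U_n(x)^(2N/(N−2)) dx − A_N^(2N/(N−2))·∫_{ℝ^N} (1+|y|²)^(−N) dy| ≤ C·n^(−N). -/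
open MeasureTheory

set_option maxHeartbeats 1000000 in
/-- Critical norm estimate:
`‖U_n‖_{2*}^{2*} = A_N^{2*} ∫ (1+|y|²)^{-N} dy + O(n^{-N})`. -/
theorem truncatedBubble_critical_norm_estimate
    (N : ℕ) (hN : 3 ≤ N) :
    ∃ C : ℝ, 0 < C ∧
      ∀ n : ℕ, 1 ≤ n →
        |(∫ x : EuclideanSpace ℝ (Fin N),
            truncatedBubble N n x ^ (2 * (N : ℝ) / ((N : ℝ) - 2))) -
          (((N : ℝ) * ((N : ℝ) - 2)) ^ (((N : ℝ) - 2) / 4)) ^ (2 * (N : ℝ) / ((N : ℝ) - 2)) *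
            (∫ y : EuclideanSpace ℝ (Fin N), (1 + ‖y‖ ^ 2) ^ (-(N : ℝ)))| ≤
          C * (n : ℝ) ^ (-(N : ℝ)) := by
  classical
  have hN3 : (3 : ℝ) ≤ (N : ℝ) := by exact_mod_cast hN
  have hN2 : (0 : ℝ) < (N : ℝ) - 2 := by linarith
  have hNpos : (0 : ℝ) < (N : ℝ) := by linarith
  set p : ℝ := 2 * (N : ℝ) / ((N : ℝ) - 2) with hp
  have hp_pos : 0 < p := div_pos (by linarith) hN2
  set A : ℝ := ((N : ℝ) * ((N : ℝ) - 2)) ^ (((N : ℝ) - 2) / 4) with hA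
  have hA_pos : 0 < A := Real.rpow_pos_of_pos (by nlinarith) _
  have hexp : ((N : ℝ) - 2) / 2 * p = (N : ℝ) := by
    rw [hp]; field_simp
  set E := EuclideanSpace ℝ (Fin N) with hE
  have hfr : Module.finrank ℝ E = N := finrank_euclideanSpace_fin
  haveI : Nontrivial E := Module.nontrivial_of_finrank_pos (R := ℝ) (by omega : 0 < Module.finrank ℝ E)
  set g : E → ℝ := fun y => (1 + ‖y‖ ^ 2) ^ (-(N : ℝ)) with hg
  have hg_nonneg : ∀ y, 0 ≤ g y := fun y => Real.rpow_nonneg (by positivity) _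
  have hg_int : Integrable g := by
    have h := integrable_rpow_neg_one_add_norm_sq (E := E) (μ := volume)
      (r := 2 * (N : ℝ)) (by rw [hfr]; linarith)
    convert h using 2 with y
    rw [hg]
    congr 1
    ring
  set v : ℝ := (volume (Metric.ball (0 : E) 1)).toReal with hv
  set w : ℝ := (volume (Metric.ball (0 : E) 2)).toReal with hw
  have hv0 : 0 ≤ v := ENNReal.toReal_nonneg
  have hw0 : 0 ≤ w := ENNReal.toReal_nonneg
  refine ⟨A ^ p * (v + w) + 1, by positivity, ?_⟩
  intro n hn
  have hn0 : (0 : ℝ) < (n : ℝ) := by exact_mod_cast hn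
  have hn1 : (1 : ℝ) ≤ (n : ℝ) := by exact_mod_cast hn
  have hnN : (0 : ℝ) ≤ (n : ℝ) ^ (-(N : ℝ)) := Real.rpow_nonneg hn0.le _
  -- the two indicator pieces
  set φ : E → ℝ := Set.indicator (Metric.ball (0 : E) 1)
    (fun x => ((n : ℝ) / (1 + (n : ℝ) ^ 2 * ‖x‖ ^ 2)) ^ (N : ℝ)) with hφ
  set s₂ : Set E := Metric.ball (0 : E) 2 \ Metric.ball (0 : E) 1 with hs₂
  set cn : ℝ := ((n : ℝ) / (1 + (n : ℝ) ^ 2)) ^ (N : ℝ) with hcn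
  have hcn0 : 0 ≤ cn := Real.rpow_nonneg (by positivity) _
  set ψ : E → ℝ := Set.indicator s₂ (fun x => cn * (2 - ‖x‖) ^ p) with hψ
  -- pointwise decomposition
  have hpt : ∀ x : E, truncatedBubble N n x ^ p = A ^ p * φ x + A ^ p * ψ x := by
    intro x
    by_cases h1 : ‖x‖ < 1
    · have hx1 : x ∈ Metric.ball (0 : E) 1 := by
        simpa [Metric.mem_ball, dist_zero_right] using h1
      have hx2 : x ∉ s₂ := fun hx => hx.2 hx1
      have hb0 : (0 : ℝ) ≤ (n : ℝ) / (1 + (n : ℝ) ^ 2 * ‖x‖ ^ 2) := by positivity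
      rw [hφ, hψ, Set.indicator_of_mem hx1, Set.indicator_of_notMem hx2]
      rw [truncatedBubble, if_pos h1, Real.mul_rpow hA_pos.le (Real.rpow_nonneg hb0 _),
        ← Real.rpow_mul hb0, hexp]
      ring
    · by_cases h2 : ‖x‖ < 2
      · have hx2 : x ∈ s₂ := by
          constructor
          · simpa [Metric.mem_ball, dist_zero_right] using h2
          · simpa [Metric.mem_ball, dist_zero_right] using h1
        have hx1 : x ∉ Metric.ball (0 : E) 1 := by
          simpa [Metric.mem_ball, dist_zero_right] using h1
        have hb0 : (0 : ℝ) ≤ (n : ℝ) / (1 + (n : ℝ) ^ 2) := by positivity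
        have h2x : (0 : ℝ) ≤ 2 - ‖x‖ := by linarith
        rw [hφ, hψ, Set.indicator_of_mem hx2, Set.indicator_of_notMem hx1]
        rw [truncatedBubble, if_neg h1, if_pos h2,
          Real.mul_rpow (by positivity) h2x,
          Real.mul_rpow hA_pos.le (Real.rpow_nonneg hb0 _),
          ← Real.rpow_mul hb0, hexp, hcn]
        ring
      · have hx1 : x ∉ Metric.ball (0 : E) 1 := by
          simpa [Metric.mem_ball, dist_zero_right] using h1
        have hx2 : x ∉ s₂ := fun hx => h2 (by simpa [Metric.mem_ball, dist_zero_right] using hx.1)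
        rw [hφ, hψ, Set.indicator_of_notMem hx1, Set.indicator_of_notMem hx2,
          truncatedBubble, if_neg h1, if_neg h2, Real.zero_rpow hp_pos.ne']
        ring
  -- integrability of φ
  have hφ_int : Integrable φ := by
    rw [hφ, integrable_indicator_iff measurableSet_ball]
    apply Measure.integrableOn_of_bounded (M := (n : ℝ) ^ (N : ℝ)) measure_ball_lt_top.ne
    · exact Measurable.aestronglyMeasurable (by fun_prop)
    · filter_upwards with x
      have hb0 : (0 : ℝ) ≤ (n : ℝ) / (1 + (n : ℝ) ^ 2 * ‖x‖ ^ 2) := by positivity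
      rw [Real.norm_eq_abs, abs_of_nonneg (Real.rpow_nonneg hb0 _)]
      apply Real.rpow_le_rpow hb0 _ hNpos.le
      rw [div_le_iff₀ (by positivity)]
      nlinarith [sq_nonneg (‖x‖ * (n:ℝ)), hn0.le]
  -- integrability of ψ
  have hs₂m : MeasurableSet s₂ :=
    measurableSet_ball.diff measurableSet_ball
  have hs₂fin : volume s₂ < ⊤ :=
    lt_of_le_of_lt (measure_mono Set.diff_subset) measure_ball_lt_top
  have hψ_bound : ∀ x ∈ s₂, ‖cn * (2 - ‖x‖) ^ p‖ ≤ cn := by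
    intro x hx
    have hx2 : ‖x‖ < 2 := by simpa [Metric.mem_ball, dist_zero_right] using hx.1
    have hx1 : (1 : ℝ) ≤ ‖x‖ := by
      have := hx.2; simpa [Metric.mem_ball, dist_zero_right, not_lt] using this
    have h0 : (0 : ℝ) ≤ 2 - ‖x‖ := by linarith
    have h1 : (2 - ‖x‖ : ℝ) ≤ 1 := by linarith
    rw [Real.norm_eq_abs, abs_of_nonneg (by positivity)]
    calc cn * (2 - ‖x‖) ^ p ≤ cn * 1 := by
          exact mul_le_mul_of_nonneg_left (Real.rpow_le_one h0 h1 hp_pos.le) hcn0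
      _ = cn := mul_one cn
  have hψ_int : Integrable ψ := by
    rw [hψ, integrable_indicator_iff hs₂m]
    apply Measure.integrableOn_of_bounded (M := cn) hs₂fin.ne
    · exact Measurable.aestronglyMeasurable (by fun_prop)
    · rw [ae_restrict_iff' hs₂m]
      filter_upwards with x hx using hψ_bound x hx
  -- change of variables for φ
  have hφ_val : ∫ x, φ x = ∫ y in Metric.ball (0 : E) (n : ℝ), g y := by
    have hcs := Measure.integral_comp_inv_smul (volume : Measure E) φ (n : ℝ)
    have hφs : ∀ x : E, φ ((n : ℝ)⁻¹ • x) =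
        Set.indicator (Metric.ball (0 : E) (n : ℝ)) (fun y => (n : ℝ) ^ N * g y) x := by
      intro x
      have hnorm : ‖(n : ℝ)⁻¹ • x‖ = (n : ℝ)⁻¹ * ‖x‖ := by
        rw [norm_smul, Real.norm_eq_abs, abs_of_nonneg (inv_nonneg.2 hn0.le)]
      by_cases hx : ‖x‖ < (n : ℝ)
      · have hmem : (n : ℝ)⁻¹ • x ∈ Metric.ball (0 : E) 1 := by
          rw [Metric.mem_ball, dist_zero_right, hnorm]
          rw [inv_mul_lt_iff₀ hn0, mul_one]
          exact hx
        have hmem' : x ∈ Metric.ball (0 : E) (n : ℝ) := by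
          simpa [Metric.mem_ball, dist_zero_right] using hx
        rw [hφ, Set.indicator_of_mem hmem, Set.indicator_of_mem hmem', hnorm]
        simp only [hg]
        have harg : (n : ℝ) ^ 2 * ((n : ℝ)⁻¹ * ‖x‖) ^ 2 = ‖x‖ ^ 2 := by
          field_simp
        rw [harg, Real.div_rpow hn0.le (by positivity), Real.rpow_neg (by positivity),
          Real.rpow_natCast]
        ring
      · have hmem : (n : ℝ)⁻¹ • x ∉ Metric.ball (0 : E) 1 := by
          rw [Metric.mem_ball, dist_zero_right, hnorm, inv_mul_lt_iff₀ hn0, mul_one]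
          exact hx
        have hmem' : x ∉ Metric.ball (0 : E) (n : ℝ) := by
          simpa [Metric.mem_ball, dist_zero_right] using hx
        rw [hφ, Set.indicator_of_notMem hmem, Set.indicator_of_notMem hmem']
    simp only [hφs] at hcs
    rw [integral_indicator measurableSet_ball, integral_const_mul, hfr,
      abs_of_nonneg (pow_nonneg hn0.le _), smul_eq_mul] at hcs
    exact (mul_left_cancel₀ (pow_ne_zero N hn0.ne') hcs).symm
  -- split the integral of g
  have hg_split : (∫ y, g y) =
      (∫ y in Metric.ball (0 : E) (n : ℝ), g y) +
        ∫ y in (Metric.ball (0 : E) (n : ℝ))ᶜ, g y :=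
    (integral_add_compl measurableSet_ball hg_int).symm
  -- tail bound
  have hTail_nonneg : 0 ≤ ∫ y in (Metric.ball (0 : E) (n : ℝ))ᶜ, g y :=
    setIntegral_nonneg measurableSet_ball.compl fun y _ => hg_nonneg y
  have hTail : (∫ y in (Metric.ball (0 : E) (n : ℝ))ᶜ, g y) ≤ v * (n : ℝ) ^ (-(N : ℝ)) := by
    set h : ℝ → ℝ := Set.indicator (Set.Ici (n : ℝ)) (fun r => (1 + r ^ 2) ^ (-(N : ℝ))) with hh
    have h1 : (∫ y in (Metric.ball (0 : E) (n : ℝ))ᶜ, g y) = ∫ x : E, h ‖x‖ := by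
      rw [← integral_indicator measurableSet_ball.compl]
      congr 1 with x
      by_cases hx : ‖x‖ < (n : ℝ)
      · rw [Set.indicator_of_notMem, hh, Set.indicator_of_notMem]
        · simpa [Set.mem_Ici, not_le] using hx
        · simpa [Metric.mem_ball, dist_zero_right] using hx
      · rw [Set.indicator_of_mem, hh, Set.indicator_of_mem]
        · simpa [Set.mem_Ici] using not_lt.1 hx
        · simpa [Metric.mem_ball, dist_zero_right] using hx
    have h2 := MeasureTheory.integral_fun_norm_addHaar (volume : Measure E) h
    rw [hfr] at h2
    -- evaluate / bound the radial integral
    have hkey : ∀ r : ℝ, r ∈ Set.Ioi (n : ℝ) →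
        r ^ (N - 1) * (1 + r ^ 2) ^ (-(N : ℝ)) ≤ r ^ (-(N : ℝ) - 1) := by
      intro r hr
      have hr0 : (0 : ℝ) < r := hn0.trans hr
      have hb : (1 + r ^ 2 : ℝ) ^ (-(N : ℝ)) ≤ (r ^ 2) ^ (-(N : ℝ)) :=
        Real.rpow_le_rpow_of_nonpos (by positivity) (by linarith) (by linarith)
      have heq : (r ^ (N - 1) : ℝ) * (r ^ 2) ^ (-(N : ℝ)) = r ^ (-(N : ℝ) - 1) := by
        rw [← Real.rpow_natCast r (N - 1), ← Real.rpow_natCast r 2,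
          ← Real.rpow_mul hr0.le, ← Real.rpow_add hr0]
        congr 1
        have : ((N - 1 : ℕ) : ℝ) = (N : ℝ) - 1 := by
          rw [Nat.cast_sub (by omega), Nat.cast_one]
        rw [this]; ring
      calc r ^ (N - 1) * (1 + r ^ 2) ^ (-(N : ℝ)) ≤ r ^ (N - 1) * (r ^ 2) ^ (-(N : ℝ)) :=
            mul_le_mul_of_nonneg_left hb (pow_nonneg hr0.le _)
        _ = r ^ (-(N : ℝ) - 1) := heq
    have hrint : IntegrableOn (fun r : ℝ => r ^ (-(N : ℝ) - 1)) (Set.Ioi (n : ℝ)) :=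
      integrableOn_Ioi_rpow_of_lt (by linarith) hn0
    have hlint : IntegrableOn (fun r : ℝ => r ^ (N - 1) * (1 + r ^ 2) ^ (-(N : ℝ)))
        (Set.Ioi (n : ℝ)) := by
      apply hrint.mono' (Measurable.aestronglyMeasurable (by fun_prop))
      rw [ae_restrict_iff' measurableSet_Ioi]
      filter_upwards with r hr
      have hr0 : (0 : ℝ) < r := hn0.trans hr
      rw [Real.norm_eq_abs, abs_of_nonneg (mul_nonneg (pow_nonneg hr0.le _)
        (Real.rpow_nonneg (by positivity) _))]
      exact hkey r hr
    have hJ : (∫ r in Set.Ioi (0 : ℝ), r ^ (N - 1) • h r) ≤ (n : ℝ) ^ (-(N : ℝ)) / N := by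
      have e1 : (∫ r in Set.Ioi (0 : ℝ), r ^ (N - 1) • h r) =
          ∫ r in Set.Ioi (0 : ℝ), Set.indicator (Set.Ici (n : ℝ))
            (fun r => r ^ (N - 1) * (1 + r ^ 2) ^ (-(N : ℝ))) r := by
        congr 1 with r
        rw [smul_eq_mul, hh]
        by_cases hr : r ∈ Set.Ici (n : ℝ)
        · rw [Set.indicator_of_mem hr, Set.indicator_of_mem hr]
        · rw [Set.indicator_of_notMem hr, Set.indicator_of_notMem hr, mul_zero]
      have e2 : (∫ r in Set.Ioi (0 : ℝ), Set.indicator (Set.Ici (n : ℝ))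
            (fun r => r ^ (N - 1) * (1 + r ^ 2) ^ (-(N : ℝ))) r) =
          ∫ r in Set.Ioi (n : ℝ), r ^ (N - 1) * (1 + r ^ 2) ^ (-(N : ℝ)) := by
        have hsub : Set.Ioi (0 : ℝ) ∩ Set.Ici (n : ℝ) = Set.Ici (n : ℝ) :=
          Set.inter_eq_self_of_subset_right (fun r hr => lt_of_lt_of_le hn0 hr)
        rw [setIntegral_indicator measurableSet_Ici, hsub,
          ← MeasureTheory.integral_Ici_eq_integral_Ioi]
      have e3 : (∫ r in Set.Ioi (n : ℝ), r ^ (N - 1) * (1 + r ^ 2) ^ (-(N : ℝ))) ≤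
          ∫ r in Set.Ioi (n : ℝ), r ^ (-(N : ℝ) - 1) :=
        setIntegral_mono_on hlint hrint measurableSet_Ioi hkey
      have e4 : (∫ r in Set.Ioi (n : ℝ), r ^ (-(N : ℝ) - 1)) = (n : ℝ) ^ (-(N : ℝ)) / N := by
        rw [integral_Ioi_rpow_of_lt (by linarith) hn0]
        rw [show (-(N : ℝ) - 1) + 1 = -(N : ℝ) by ring]
        field_simp
      rw [e1, e2, ← e4]
      exact e3
    rw [h1, h2, nsmul_eq_mul, smul_eq_mul]
    calc (N : ℝ) * (v * ∫ r in Set.Ioi (0 : ℝ), r ^ (N - 1) • h r) ≤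
        (N : ℝ) * (v * ((n : ℝ) ^ (-(N : ℝ)) / N)) := by
          exact mul_le_mul_of_nonneg_left (mul_le_mul_of_nonneg_left hJ hv0) hNpos.le
      _ = v * (n : ℝ) ^ (-(N : ℝ)) := by field_simp
  -- bound for the ψ piece
  have hψ_val : |∫ x, ψ x| ≤ (n : ℝ) ^ (-(N : ℝ)) * w := by
    rw [hψ, integral_indicator hs₂m]
    have hb := norm_setIntegral_le_of_norm_le_const (μ := volume) (s := s₂)
      (f := fun x => cn * (2 - ‖x‖) ^ p) hs₂fin hψ_bound
    rw [Real.norm_eq_abs] at hb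
    refine hb.trans ?_
    have hcn_le : cn ≤ (n : ℝ) ^ (-(N : ℝ)) := by
      have h1 : (n : ℝ) / (1 + (n : ℝ) ^ 2) ≤ ((n : ℝ))⁻¹ := by
        rw [div_le_iff₀ (by positivity)]
        rw [inv_mul_eq_div, le_div_iff₀ hn0]
        nlinarith
      calc cn ≤ ((n : ℝ)⁻¹) ^ (N : ℝ) :=
            Real.rpow_le_rpow (by positivity) h1 hNpos.le
        _ = (n : ℝ) ^ (-(N : ℝ)) := by
            rw [Real.rpow_neg hn0.le, ← Real.inv_rpow hn0.le]
    have hμ : (volume s₂).toReal ≤ w := by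
      apply ENNReal.toReal_mono measure_ball_lt_top.ne
      exact measure_mono Set.diff_subset
    exact mul_le_mul hcn_le hμ ENNReal.toReal_nonneg hnN
  -- put everything together
  have hsplit : (∫ x, truncatedBubble N n x ^ p) = A ^ p * (∫ x, φ x) + A ^ p * ∫ x, ψ x := by
    rw [show (fun x => truncatedBubble N n x ^ p) = fun x => A ^ p * φ x + A ^ p * ψ x from
      funext hpt]
    rw [integral_add (hφ_int.const_mul _) (hψ_int.const_mul _), integral_const_mul,
      integral_const_mul]
  rw [hsplit, hφ_val, hg_split]
  have key : A ^ p * (∫ y in Metric.ball (0 : E) (n : ℝ), g y) + A ^ p * (∫ x, ψ x) -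
      A ^ p * ((∫ y in Metric.ball (0 : E) (n : ℝ), g y) +
        ∫ y in (Metric.ball (0 : E) (n : ℝ))ᶜ, g y) =
      A ^ p * (∫ x, ψ x) - A ^ p * ∫ y in (Metric.ball (0 : E) (n : ℝ))ᶜ, g y := by ring
  rw [key]
  have hAp : (0 : ℝ) ≤ A ^ p := Real.rpow_nonneg hA_pos.le _
  calc |A ^ p * (∫ x, ψ x) - A ^ p * ∫ y in (Metric.ball (0 : E) (n : ℝ))ᶜ, g y| ≤
      A ^ p * |∫ x, ψ x| + A ^ p * |∫ y in (Metric.ball (0 : E) (n : ℝ))ᶜ, g y| := by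
        refine (abs_sub _ _).trans ?_
        rw [abs_mul, abs_mul, abs_of_nonneg hAp]
    _ ≤ A ^ p * ((n : ℝ) ^ (-(N : ℝ)) * w) + A ^ p * (v * (n : ℝ) ^ (-(N : ℝ))) := by
        apply add_le_add
        · exact mul_le_mul_of_nonneg_left hψ_val hAp
        · rw [abs_of_nonneg hTail_nonneg]
          exact mul_le_mul_of_nonneg_left hTail hAp
    _ ≤ (A ^ p * (v + w) + 1) * (n : ℝ) ^ (-(N : ℝ)) := by nlinarith
end
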